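/- arXiv:2604.21597 — 5 statements merged into one kernel-verified Lean document; each statement's English description precedes it below -/
import Mathlib

section
/- Let 𝕜 be a field and let 𝒱 be a 𝕜-vector space with an exhaustive, separated ascending ℤ-filtration (𝒱_i). Suppose λ : 𝕜ˣ → Aut(𝒱) is an action by filtered automorphisms that is rational (i.e. 𝒱 decomposes as a direct sum of λ-eigenspaces). Define the λ-twisted filtration by 𝒱^λ_k := ⊕_{i+j=k} { v ∈ 𝒱_i | λ(t)v = t^j v for all t }. Then the associated graded space of the λ-twisted filtration is canonically isomorphic to the λ-twist of the associated graded space: gr(𝒱^λ) = (gr 𝒱)^λ as graded vector spaces. -/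
/-!
The eigenspaces `E j` are independent, hence so are the pieces `F i ⊓ E (k - i)`, and the
`k`-th step of the twisted filtration is their internal direct sum. After reindexing, the
`(k-1)`-st step is the sum of the smaller pieces `F (i - 1) ⊓ E (k - i)`, and a quotient of an
independent sum by a termwise smaller sum is the direct sum of the termwise quotients.
-/

open DirectSum

abbrev grPiece {𝕜 V : Type*} [Field 𝕜] [AddCommGroup V] [Module 𝕜 V]
    (p q : Submodule 𝕜 V) : Type _ :=
  q ⧸ (p.comap q.subtype)

section

variable {R M ι : Type*} [Ring R] [AddCommGroup M] [Module R M] [DecidableEq ι]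
  {A B : ι → Submodule R M}

theorem DirectSum.coeLinearMap_comp_lmap_inclusion (hBA : ∀ i, B i ≤ A i) :
    coeLinearMap A ∘ₗ lmap (fun i => Submodule.inclusion (hBA i)) = coeLinearMap B := by
  ext i b
  simp

theorem iSupIndep.coeLinearMap_injective (hA : iSupIndep A) :
    Function.Injective (coeLinearMap A) :=
  hA.dfinsupp_lsum_injective

theorem iSupIndep.coeLinearMap_mem_iSup_iff (hA : iSupIndep A) (hBA : ∀ i, B i ≤ A i)
    (x : ⨁ i, A i) : coeLinearMap A x ∈ ⨆ i, B i ↔ ∀ i, (x i : M) ∈ B i := by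
  classical
  constructor
  · intro hx
    obtain ⟨y, hy⟩ := (Submodule.mem_iSup_iff_exists_dfinsupp B _).mp hx
    have hxy : x = lmap (fun i => Submodule.inclusion (hBA i)) y :=
      hA.coeLinearMap_injective <|
        hy.symm.trans (LinearMap.congr_fun (coeLinearMap_comp_lmap_inclusion hBA) y).symm
    intro i
    rw [hxy]
    exact (y i).2
  · intro hx
    rw [coeLinearMap_eq_dfinsuppSum]
    exact Submodule.dfinsuppSum_mem _ _ _ fun i _ => Submodule.mem_iSup_of_mem i (hx i)

theorem iSupIndep.ker_lmap_mkQ (hA : iSupIndep A) (hBA : ∀ i, B i ≤ A i) :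
    LinearMap.ker (lmap fun i => ((B i).comap (A i).subtype).mkQ) =
      (⨆ i, B i).comap (coeLinearMap A) := by
  ext x
  simp [hA.coeLinearMap_mem_iSup_iff hBA, DirectSum.ext_iff, Submodule.Quotient.mk_eq_zero]

noncomputable def iSupIndep.linearEquivISup (hA : iSupIndep A) :
    (⨁ i, A i) ≃ₗ[R] ↥(⨆ i, A i) :=
  (LinearEquiv.ofInjective _ hA.coeLinearMap_injective).trans
    (LinearEquiv.ofEq _ _ range_coeLinearMap)

theorem iSupIndep.comap_linearEquivISup (hA : iSupIndep A) (p : Submodule R M) :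
    (p.comap (⨆ i, A i).subtype).comap hA.linearEquivISup.toLinearMap =
      p.comap (coeLinearMap A) :=
  rfl

noncomputable def iSupIndep.iSupQuotientEquiv (hA : iSupIndep A) (hBA : ∀ i, B i ≤ A i) :
    (↥(⨆ i, A i) ⧸ (⨆ i, B i).comap (⨆ i, A i).subtype) ≃ₗ[R]
      ⨁ i, A i ⧸ (B i).comap (A i).subtype :=
  (Submodule.Quotient.equiv _ (LinearMap.ker (lmap fun i => ((B i).comap (A i).subtype).mkQ))
      hA.linearEquivISup.symm (by
    rw [Submodule.map_equiv_eq_comap_symm, LinearEquiv.symm_symm, hA.comap_linearEquivISup,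
      hA.ker_lmap_mkQ hBA])).trans <|
    LinearMap.quotKerEquivOfSurjective (M₂ := ⨁ i, A i ⧸ (B i).comap (A i).subtype) _
      ((lmap_surjective _).mpr fun _ => Submodule.mkQ_surjective _)

end

theorem stmt0_general {𝕜 V : Type*} [Field 𝕜] [AddCommGroup V] [Module 𝕜 V]
    (F : ℤ → Submodule 𝕜 V) (hmono : Monotone F)
    (E : ℤ → Submodule 𝕜 V)
    (hrat : DirectSum.IsInternal E) :
    ∀ Fl : ℤ → Submodule 𝕜 V,
      (∀ m : ℤ, Fl m = ⨆ i : ℤ, (F i ⊓ E (m - i))) →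
      ∀ k : ℤ, Nonempty
        (grPiece (Fl (k-1)) (Fl k) ≃ₗ[𝕜]
          ⨁ i : ℤ, grPiece (F (i-1) ⊓ E (k-i)) (F i ⊓ E (k-i))) := by
  intro Fl hFl k
  have hshift : Fl (k - 1) = ⨆ i, F (i - 1) ⊓ E (k - i) := by
    rw [hFl, ← (Equiv.subRight 1).iSup_comp]
    congr! 3 with i
    show E (k - 1 - (i - 1)) = E (k - i)
    rw [sub_sub_sub_cancel_right]
  have hind : iSupIndep fun i => F i ⊓ E (k - i) :=
    (hrat.submodule_iSupIndep.comp sub_right_injective).mono fun _ => inf_le_right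
  rw [hFl k, hshift]
  exact ⟨hind.iSupQuotientEquiv fun i => inf_le_inf_right _ (hmono (sub_le_self i zero_le_one))⟩

/-- Let `𝒱` be a filtered vector space (exhaustive, separated ascending `ℤ`-filtration
`F`) with a rational action `ρ` of `𝕜ˣ` by filtered automorphisms, i.e. `𝒱` is the direct
sum of the eigenspaces `E j = {v | ρ(t)v = t^j v}`.  Define the `λ`-twisted filtration
`𝒱^λ_k = ⊕_{i+j=k} (F i ∩ E j)`.  Then in every degree `k` the associated graded of the
twisted filtration is isomorphic to the `λ`-twist of the associated graded:
`gr_k(𝒱^λ) ≅ ⊕_{i+j=k} (the j-eigenspace of gr_i 𝒱)`, the latter realised as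
`⊕_i (F i ∩ E (k-i))/(F (i-1) ∩ E (k-i))`. -/
theorem stmt0 {𝕜 V : Type*} [Field 𝕜] [AddCommGroup V] [Module 𝕜 V]
    (F : ℤ → Submodule 𝕜 V) (hmono : Monotone F)
    (hexh : ⨆ i, F i = ⊤) (hsep : ⨅ i, F i = ⊥)
    (ρ : 𝕜ˣ →* (V ≃ₗ[𝕜] V))
    (E : ℤ → Submodule 𝕜 V)
    (hE : ∀ (j : ℤ) (v : V), v ∈ E j ↔ ∀ t : 𝕜ˣ, ρ t v = ((t ^ j : 𝕜ˣ) : 𝕜) • v)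
    (hfilt : ∀ (t : 𝕜ˣ) (i : ℤ), (F i).map (ρ t : V ≃ₗ[𝕜] V).toLinearMap = F i)
    (hrat : DirectSum.IsInternal E) :
    ∀ Fl : ℤ → Submodule 𝕜 V,
      (∀ m : ℤ, Fl m = ⨆ i : ℤ, (F i ⊓ E (m - i))) →
      ∀ k : ℤ, Nonempty
        (grPiece (Fl (k-1)) (Fl k) ≃ₗ[𝕜]
          ⨁ i : ℤ, grPiece (F (i-1) ⊓ E (k-i)) (F i ⊓ E (k-i))) :=
  stmt0_general F hmono E hrat
end

section
/- Let ℬ = ⋃_{i∈ℤ} ℬ_i be a ℤ-filtered commutative ring whose associated graded ring gr ℬ is an integral domain, with 1 ∈ ℬ_0 \ ℬ_{-1}, and let δ ∈ ℬ_d \ ℬ_{d-1} with symbol δ̄ = δ + ℬ_{d-1} ∈ gr ℬ. Then the localization ℬ_δ carries a natural filtration (assigning b/δ^n filtration degree i − nd when b ∈ ℬ_i) for which there is an isomorphism of graded rings gr(ℬ_δ) ≅ (gr ℬ)_{δ̄}. -/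
/-!
Multiplication by `δ` is strict: since `gr ℬ` is a domain and `δ̄ ≠ 0`, the symbol of `b δ ^ n`
is `σ(b) δ̄ ^ n`, which is nonzero when `σ(b)` is, so `b δ ^ n ∈ ℬ_{j + nd}` forces `b ∈ ℬ_j`.
Hence neither the degree of `b / δ ^ n` nor its symbol `σ(b) / δ̄ ^ n` depends on the
representation. That `H` is a grading of `(gr ℬ)_{δ̄}` follows by clearing denominators with a
common power of `δ̄` and comparing homogeneous components in `gr ℬ`.
-/

open DirectSum Filter

section graded

variable {R : Type*} [Ring R] {F : ℤ → AddSubgroup R} [SetLike.GradedMonoid F] {δ : R} {d : ℤ}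

lemma pow_mem_mul_of_mem (hδ : δ ∈ F d) (n : ℕ) : δ ^ n ∈ F (n * d) := by
  simpa only [nsmul_eq_mul] using SetLike.pow_mem_graded n hδ

lemma mul_pow_mem_add_mul (hδ : δ ∈ F d) {b : R} {i : ℤ} (hb : b ∈ F i) (n : ℕ) :
    b * δ ^ n ∈ F (i + n * d) :=
  SetLike.mul_mem_graded hb (pow_mem_mul_of_mem hδ n)

end graded

def awayFamily {R : Type*} [CommRing R] (F : ℤ → AddSubgroup R) (δ : R) (d k : ℤ) :
    AddSubgroup (Localization.Away δ) :=
  AddSubgroup.closure {y | ∃ (n : ℕ) (b : R), b ∈ F (k + (n : ℤ) * d) ∧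
    y * algebraMap R (Localization.Away δ) δ ^ n = algebraMap R (Localization.Away δ) b}

section awayFamily

variable {R : Type*} [CommRing R] {F : ℤ → AddSubgroup R} {δ : R} {d : ℤ}

lemma awayFamily_mono (hF : Monotone F) : Monotone (awayFamily F δ d) :=
  fun _ _ hkl ↦ AddSubgroup.closure_mono fun _ ⟨n, b, hb, hy⟩ ↦
    ⟨n, b, hF (by omega) hb, hy⟩

lemma exists_mem_awayFamily (hF : ∀ b : R, ∃ i : ℤ, b ∈ F i) (y : Localization.Away δ) :
    ∃ k : ℤ, y ∈ awayFamily F δ d k := by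
  obtain ⟨n, b, hy⟩ := IsLocalization.Away.surj δ y
  obtain ⟨i, hb⟩ := hF b
  exact ⟨i - n * d, AddSubgroup.subset_closure ⟨n, b, by rwa [sub_add_cancel], hy⟩⟩

variable [SetLike.GradedMonoid F]

lemma one_mem_awayFamily : (1 : Localization.Away δ) ∈ awayFamily F δ d 0 :=
  AddSubgroup.subset_closure ⟨0, 1, by simpa using SetLike.one_mem_graded F, by simp⟩

lemma mem_awayFamily_iff (hδ : δ ∈ F d) {k : ℤ} {y : Localization.Away δ} :
    y ∈ awayFamily F δ d k ↔ ∃ (n : ℕ) (b : R), b ∈ F (k + (n : ℤ) * d) ∧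
      y * algebraMap R (Localization.Away δ) δ ^ n = algebraMap R (Localization.Away δ) b := by
  refine ⟨fun hy ↦ ?_, fun hy ↦ AddSubgroup.subset_closure hy⟩
  induction hy using AddSubgroup.closure_induction with
  | mem y hy => exact hy
  | zero => exact ⟨0, 0, zero_mem _, by simp⟩
  | add y z _ _ hy hz =>
    obtain ⟨n, b, hb, hyb⟩ := hy
    obtain ⟨m, c, hc, hzc⟩ := hz
    refine ⟨n + m, b * δ ^ m + c * δ ^ n, add_mem ?_ ?_, ?_⟩
    · convert mul_pow_mem_add_mul hδ hb m using 2; push_cast; ring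
    · convert mul_pow_mem_add_mul hδ hc n using 2; push_cast; ring
    · simp only [map_add, map_mul, map_pow, ← hyb, ← hzc]; ring
  | neg y _ hy =>
    obtain ⟨n, b, hb, hyb⟩ := hy
    exact ⟨n, -b, neg_mem hb, by rw [map_neg, ← hyb, neg_mul]⟩

lemma mul_mem_awayFamily (hδ : δ ∈ F d) {k l : ℤ} {x y : Localization.Away δ}
    (hx : x ∈ awayFamily F δ d k) (hy : y ∈ awayFamily F δ d l) :
    x * y ∈ awayFamily F δ d (k + l) := by
  obtain ⟨n, b, hb, hxb⟩ := (mem_awayFamily_iff hδ).1 hx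
  obtain ⟨m, c, hc, hyc⟩ := (mem_awayFamily_iff hδ).1 hy
  refine (mem_awayFamily_iff hδ).2 ⟨n + m, b * c, ?_, ?_⟩
  · convert SetLike.mul_mem_graded hb hc using 2; push_cast; ring
  · rw [map_mul, pow_add, ← hxb, ← hyc]; ring

lemma eventually_exists_mul_pow_eq (hδ : δ ∈ F d) {k : ℤ} {y : Localization.Away δ}
    (hy : y ∈ awayFamily F δ d k) :
    ∀ᶠ N : ℕ in atTop, ∃ b ∈ F (k + (N : ℤ) * d),
      y * algebraMap R (Localization.Away δ) δ ^ N = algebraMap R (Localization.Away δ) b := by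
  obtain ⟨n, b, hb, hyb⟩ := (mem_awayFamily_iff hδ).1 hy
  filter_upwards [eventually_ge_atTop n] with N hN
  obtain ⟨m, rfl⟩ := Nat.exists_eq_add_of_le hN
  refine ⟨b * δ ^ m, ?_, ?_⟩
  · convert mul_pow_mem_add_mul hδ hb m using 2; push_cast; ring
  · rw [pow_add, ← mul_assoc, hyb, map_mul, map_pow]

end awayFamily

lemma algebraMap_pow_mul_invSelf_pow {R : Type*} [CommRing R] (s : R) (n : ℕ) :
    algebraMap R (Localization.Away s) s ^ n * IsLocalization.Away.invSelf s ^ n = 1 := by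
  rw [← mul_pow, IsLocalization.Away.mul_invSelf, one_pow]

lemma isUnit_algebraMap_pow_away {R : Type*} [CommRing R] (s : R) (n : ℕ) :
    IsUnit (algebraMap R (Localization.Away s) s ^ n) :=
  IsLocalization.Away.algebraMap_pow_isUnit s n

lemma mul_pow_eq_mul_pow_of_mul_pow_eq {R : Type*} [CommRing R] {δ : R}
    (hδ : δ ∈ nonZeroDivisors R) {y : Localization.Away δ} {n m : ℕ} {b c : R}
    (hb : y * algebraMap R (Localization.Away δ) δ ^ n = algebraMap R (Localization.Away δ) b)
    (hc : y * algebraMap R (Localization.Away δ) δ ^ m = algebraMap R (Localization.Away δ) c) :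
    b * δ ^ m = c * δ ^ n :=
  IsLocalization.injective (Localization.Away δ) (Submonoid.powers_le.2 hδ) <| by
    simp only [map_mul, map_pow, ← hb, ← hc]; ring

section isInternal

variable {R : Type*} [CommRing R] {𝒜 : ℤ → AddSubgroup R} [SetLike.GradedMonoid 𝒜]
  {s : R} {d : ℤ}

lemma eq_zero_of_sum_eq_zero_of_mem_awayFamily (h𝒜 : IsInternal 𝒜) (hs : s ∈ 𝒜 d)
    (hs₀ : s ∈ nonZeroDivisors R) {t : Finset ℤ} {y : ℤ → Localization.Away s}
    (hy : ∀ k, y k ∈ awayFamily 𝒜 s d k) (hsum : ∑ k ∈ t, y k = 0) {j : ℤ} (hj : j ∈ t) :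
    y j = 0 := by
  classical
  let _ := h𝒜.chooseDecomposition
  obtain ⟨N, hN⟩ := ((eventually_all_finset t).2
    fun k _ ↦ eventually_exists_mul_pow_eq hs (hy k)).exists
  choose! a ha hya using hN
  have hsum_a : ∑ k ∈ t, a k = 0 := by
    refine IsLocalization.injective (Localization.Away s) (Submonoid.powers_le.2 hs₀) ?_
    rw [map_sum, map_zero, ← Finset.sum_congr rfl hya, ← Finset.sum_mul, hsum, zero_mul]
  have haj : a j = 0 := by
    have := congr_arg (fun x ↦ (decompose 𝒜 x (j + N * d) : R)) hsum_a
    simp only [decompose_sum, DirectSum.sum_apply, AddSubgroup.val_finsetSum, decompose_zero,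
      DirectSum.zero_apply, ZeroMemClass.coe_zero] at this
    rwa [Finset.sum_eq_single_of_mem j hj fun k hk hkj ↦ decompose_of_mem_ne 𝒜 (ha k hk)
      (by omega), decompose_of_mem_same 𝒜 (ha j hj)] at this
  have := hya j hj
  rwa [haj, map_zero, (isUnit_algebraMap_pow_away s N).mul_left_eq_zero] at this

lemma isInternal_awayFamily (h𝒜 : IsInternal 𝒜) (hs : s ∈ 𝒜 d)
    (hs₀ : s ∈ nonZeroDivisors R) : IsInternal (awayFamily 𝒜 s d) := by
  classical
  refine ⟨(injective_iff_map_eq_zero _).2 fun g hg ↦ ?_, fun y ↦ ?_⟩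
  · rw [coeAddMonoidHom_eq_dfinsuppSum, DFinsupp.sum] at hg
    ext k
    by_cases hk : k ∈ g.support
    · exact eq_zero_of_sum_eq_zero_of_mem_awayFamily h𝒜 hs hs₀ (fun k ↦ (g k).2) hg hk
    · exact congr_arg Subtype.val (DFinsupp.notMem_support_iff.1 hk)
  · obtain ⟨n, a, hya⟩ := IsLocalization.Away.surj s y
    let T := (DirectSum.coeAddMonoidHom (awayFamily 𝒜 s d)).range.comap
      ((AddMonoidHom.mulRight (IsLocalization.Away.invSelf s ^ n)).comp
        (algebraMap R (Localization.Away s)).toAddMonoidHom)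
    suffices ha : ∀ a, a ∈ T by
      obtain ⟨g, hg⟩ := ha a
      refine ⟨g, hg.trans ?_⟩
      rw [AddMonoidHom.comp_apply, AddMonoidHom.mulRight_apply, RingHom.toAddMonoidHom_eq_coe,
        AddMonoidHom.coe_coe, ← hya, mul_assoc, algebraMap_pow_mul_invSelf_pow, mul_one]
    intro a
    obtain ⟨x, rfl⟩ := h𝒜.2 a
    induction x using DirectSum.induction_on with
    | zero => simp [T]
    | of i a =>
      rw [coeAddMonoidHom_of]
      refine ⟨of _ (i - n * d) ⟨_, (mem_awayFamily_iff hs).2 ⟨n, a, ?_, ?_⟩⟩,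
        coeAddMonoidHom_of _ _ _⟩
      · simp
      · change algebraMap R (Localization.Away s) a * _ * _ = _
        rw [mul_assoc, mul_comm (_ ^ n), algebraMap_pow_mul_invSelf_pow, mul_one]
    | add x x' hx hx' => rw [map_add]; exact add_mem hx hx'

end isInternal

lemma exists_mem_notMem_sub_one {R : Type*} [Ring R] {F : ℤ → AddSubgroup R}
    (hF : Monotone F) {x : R} (hx : ∃ i, x ∈ F i) {j : ℤ} (hxj : x ∉ F j) :
    ∃ i, j < i ∧ x ∈ F i ∧ x ∉ F (i - 1) := by
  have hbdd : ∀ i, x ∈ F i → j + 1 ≤ i := fun i hi ↦ by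
    by_contra! h
    exact hxj (hF (by omega) hi)
  obtain ⟨i, hi, hmin⟩ := Int.exists_least_of_bdd ⟨j + 1, hbdd⟩ hx
  exact ⟨i, by linarith [hbdd i hi], hi, fun h ↦ by linarith [hmin _ h]⟩

structure IsExhaustiveSeparatedFiltration {R : Type*} [Ring R] (F : ℤ → AddSubgroup R) :
    Prop where
  mono : Monotone F
  exhaustive : ∀ b : R, ∃ i : ℤ, b ∈ F i
  separated : ∀ b : R, (∀ i : ℤ, b ∈ F i) → b = 0

/-- `σ i` plays the role of the symbol map `F i → F i / F (i - 1) ≅ 𝒜 i` of `gr F ≅ ⊕ 𝒜 i`. -/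
structure IsAssociatedGraded {R A : Type*} [Ring R] [Ring A] (F : ℤ → AddSubgroup R)
    (𝒜 : ℤ → AddSubgroup A) (σ : ∀ i : ℤ, F i →+ A) : Prop where
  range_eq : ∀ i : ℤ, (σ i).range = 𝒜 i
  map_eq_zero_iff : ∀ (i : ℤ) (x : F i), σ i x = 0 ↔ (x : R) ∈ F (i - 1)
  map_mul : ∀ (i j : ℤ) (x : F i) (y : F j) (hxy : (x : R) * (y : R) ∈ F (i + j)),
    σ (i + j) ⟨(x : R) * (y : R), hxy⟩ = σ i x * σ j y
  map_one : ∀ h : (1 : R) ∈ F 0, σ 0 ⟨1, h⟩ = 1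

namespace IsAssociatedGraded

variable {R A : Type*} [Ring R] [Ring A] {F : ℤ → AddSubgroup R}
  {𝒜 : ℤ → AddSubgroup A} {σ : ∀ i : ℤ, F i →+ A}

lemma map_mem (hσ : IsAssociatedGraded F 𝒜 σ) (i : ℤ) (x : F i) : σ i x ∈ 𝒜 i :=
  hσ.range_eq i ▸ ⟨x, rfl⟩

lemma map_mul_of_eq (hσ : IsAssociatedGraded F 𝒜 σ) {i j k : ℤ} {x y z : R} (hx : x ∈ F i)
    (hy : y ∈ F j) (hz : z ∈ F k) (hk : k = i + j) (hzxy : z = x * y) :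
    σ k ⟨z, hz⟩ = σ i ⟨x, hx⟩ * σ j ⟨y, hy⟩ := by
  subst hk hzxy
  exact hσ.map_mul i j ⟨x, hx⟩ ⟨y, hy⟩ hz

lemma map_one_of_eq (hσ : IsAssociatedGraded F 𝒜 σ) {k : ℤ} {z : R} (hz : z ∈ F k) (hk : k = 0)
    (hz₁ : z = 1) : σ k ⟨z, hz⟩ = 1 := by
  subst hk hz₁
  exact hσ.map_one hz

lemma gradedMonoid [SetLike.GradedMonoid F] (hσ : IsAssociatedGraded F 𝒜 σ) :
    SetLike.GradedMonoid 𝒜 where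
  one_mem := hσ.map_one (SetLike.one_mem_graded F) ▸ hσ.map_mem 0 _
  mul_mem i j a b ha hb := by
    rw [← hσ.range_eq] at ha hb ⊢
    obtain ⟨x, rfl⟩ := ha
    obtain ⟨y, rfl⟩ := hb
    exact ⟨_, hσ.map_mul i j x y (SetLike.mul_mem_graded x.2 y.2)⟩

variable [SetLike.GradedMonoid F] {d : ℤ} {δ : R}

lemma map_pow_of_eq (hσ : IsAssociatedGraded F 𝒜 σ) (hδ : δ ∈ F d) (n : ℕ) {k : ℤ} (hk : k = n * d)
    (h : δ ^ n ∈ F k) : σ k ⟨δ ^ n, h⟩ = σ d ⟨δ, hδ⟩ ^ n := by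
  induction n generalizing k with
  | zero => exact (hσ.map_one_of_eq h (by simpa using hk) (pow_zero δ)).trans (pow_zero _).symm
  | succ n ih =>
    rw [hσ.map_mul_of_eq (pow_mem_mul_of_mem hδ n) hδ h (by push_cast at hk; linarith)
      (pow_succ δ n), ih rfl, pow_succ]

lemma map_mul_pow (hσ : IsAssociatedGraded F 𝒜 σ) (hδ : δ ∈ F d) {b z : R} {i k : ℤ}
    (hb : b ∈ F i) {n : ℕ} (hz : z ∈ F k) (hk : k = i + n * d) (hzb : z = b * δ ^ n) :
    σ k ⟨z, hz⟩ = σ i ⟨b, hb⟩ * σ d ⟨δ, hδ⟩ ^ n := by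
  rw [hσ.map_mul_of_eq hb (pow_mem_mul_of_mem hδ n) hz hk hzb, hσ.map_pow_of_eq hδ n rfl]

lemma map_mul_pow_eq_map_mul_pow (hσ : IsAssociatedGraded F 𝒜 σ)
    (hδ : δ ∈ F d) {b c : R} {i j : ℤ} {n m : ℕ} (hb : b ∈ F i) (hc : c ∈ F j)
    (hij : i + m * d = j + n * d) (hbc : b * δ ^ m = c * δ ^ n) :
    σ i ⟨b, hb⟩ * σ d ⟨δ, hδ⟩ ^ m = σ j ⟨c, hc⟩ * σ d ⟨δ, hδ⟩ ^ n := by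
  rw [← hσ.map_mul_pow hδ hb (mul_pow_mem_add_mul hδ hb m) rfl rfl,
    hσ.map_mul_pow hδ hc _ hij hbc]

variable [NoZeroDivisors A]

lemma mem_of_mul_pow_mem (hσ : IsAssociatedGraded F 𝒜 σ) (hF : Monotone F)
    (hF_exh : ∀ b : R, ∃ i : ℤ, b ∈ F i) (hδ : δ ∈ F d) (hδ₀ : σ d ⟨δ, hδ⟩ ≠ 0) {b : R}
    {j : ℤ} {n : ℕ} (hbn : b * δ ^ n ∈ F (j + n * d)) : b ∈ F j := by
  by_contra hbj
  obtain ⟨i, hji, hb, hb'⟩ := exists_mem_notMem_sub_one hF (hF_exh b) hbj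
  have hσb : σ i ⟨b, hb⟩ ≠ 0 := (hσ.map_eq_zero_iff i _).not.2 hb'
  apply mul_ne_zero hσb (pow_ne_zero n hδ₀)
  rw [← hσ.map_mul_pow hδ hb (mul_pow_mem_add_mul hδ hb n) rfl rfl, hσ.map_eq_zero_iff]
  exact hF (by omega) hbn

end IsAssociatedGraded

section awaySymbol

variable {R A : Type*} [CommRing R] [CommRing A] {F : ℤ → AddSubgroup R}
  [SetLike.GradedMonoid F] {𝒜 : ℤ → AddSubgroup A} {d : ℤ} {δ : R}

-- `σ b / δ̄ ^ n` for a chosen representation `y = b / δ ^ n` with `b ∈ F (k + n * d)`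
noncomputable def awaySymbol (σ : ∀ i : ℤ, F i →+ A) (hδ : δ ∈ F d) (k : ℤ)
    (y : awayFamily F δ d k) : Localization.Away (σ d ⟨δ, hδ⟩) :=
  let h := (mem_awayFamily_iff hδ).1 y.2
  algebraMap A _ (σ _ ⟨h.choose_spec.choose, h.choose_spec.choose_spec.1⟩) *
    IsLocalization.Away.invSelf (S := Localization.Away (σ d ⟨δ, hδ⟩)) (σ d ⟨δ, hδ⟩) ^ h.choose

lemma awaySymbol_spec (σ : ∀ i : ℤ, F i →+ A) (hδ : δ ∈ F d) {k : ℤ} (y : awayFamily F δ d k) :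
    ∃ (n : ℕ) (b : R) (hb : b ∈ F (k + n * d)),
      (y : Localization.Away δ) * algebraMap R _ δ ^ n = algebraMap R _ b ∧
      awaySymbol σ hδ k y * algebraMap A _ (σ d ⟨δ, hδ⟩) ^ n = algebraMap A _ (σ _ ⟨b, hb⟩) := by
  obtain ⟨hb, hy⟩ := ((mem_awayFamily_iff hδ).1 y.2).choose_spec.choose_spec
  refine ⟨_, _, hb, hy, ?_⟩
  rw [awaySymbol, mul_assoc, mul_comm (_ ^ _), algebraMap_pow_mul_invSelf_pow, mul_one]

variable {σ : ∀ i : ℤ, F i →+ A} [NoZeroDivisors A]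

lemma IsAssociatedGraded.mem_nonZeroDivisors (hσ : IsAssociatedGraded F 𝒜 σ)
    (hF : IsExhaustiveSeparatedFiltration F) (hδ : δ ∈ F d) (hδ₀ : σ d ⟨δ, hδ⟩ ≠ 0) : δ ∈ nonZeroDivisors R :=
  mem_nonZeroDivisors_iff_right.2 fun b hb ↦ hF.separated b fun _ ↦
    hσ.mem_of_mul_pow_mem hF.mono hF.exhaustive hδ hδ₀ (n := 1)
      (by rw [pow_one, hb]; exact zero_mem _)

lemma mem_awayFamily_iff_of_mul_pow_eq (hσ : IsAssociatedGraded F 𝒜 σ)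
    (hF : IsExhaustiveSeparatedFiltration F) (hδ : δ ∈ F d) (hδ₀ : σ d ⟨δ, hδ⟩ ≠ 0)
    {y : Localization.Away δ} {n : ℕ} {b : R}
    (hy : y * algebraMap R (Localization.Away δ) δ ^ n = algebraMap R (Localization.Away δ) b)
    {k : ℤ} : y ∈ awayFamily F δ d k ↔ b ∈ F (k + n * d) := by
  refine ⟨fun hyk ↦ ?_, fun hb ↦ AddSubgroup.subset_closure ⟨n, b, hb, hy⟩⟩
  obtain ⟨m, c, hc, hyc⟩ := (mem_awayFamily_iff hδ).1 hyk
  refine hσ.mem_of_mul_pow_mem hF.mono hF.exhaustive hδ hδ₀ (n := m) ?_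
  rw [mul_pow_eq_mul_pow_of_mul_pow_eq (hσ.mem_nonZeroDivisors hF hδ hδ₀) hy hyc]
  convert mul_pow_mem_add_mul hδ hc n using 2; ring

lemma isExhaustiveSeparatedFiltration_awayFamily
    (hσ : IsAssociatedGraded F 𝒜 σ) (hF : IsExhaustiveSeparatedFiltration F) (hδ : δ ∈ F d)
    (hδ₀ : σ d ⟨δ, hδ⟩ ≠ 0) : IsExhaustiveSeparatedFiltration (awayFamily F δ d) where
  mono := awayFamily_mono hF.mono
  exhaustive := exists_mem_awayFamily hF.exhaustive
  separated y hy := by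
    obtain ⟨n, b, hyb⟩ := IsLocalization.Away.surj δ y
    have hb : b = 0 := hF.separated b fun j ↦ by
      simpa using (mem_awayFamily_iff_of_mul_pow_eq hσ hF hδ hδ₀ hyb).1 (hy (j - n * d))
    rwa [hb, map_zero, (isUnit_algebraMap_pow_away δ n).mul_left_eq_zero] at hyb

lemma awaySymbol_mul_pow (hσ : IsAssociatedGraded F 𝒜 σ)
    (hF : IsExhaustiveSeparatedFiltration F) (hδ : δ ∈ F d) (hδ₀ : σ d ⟨δ, hδ⟩ ≠ 0) {k : ℤ}
    (y : awayFamily F δ d k) {n : ℕ} {b : R} (hb : b ∈ F (k + n * d))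
    (hy : (y : Localization.Away δ) * algebraMap R _ δ ^ n = algebraMap R _ b) :
    awaySymbol σ hδ k y * algebraMap A _ (σ d ⟨δ, hδ⟩) ^ n = algebraMap A _ (σ _ ⟨b, hb⟩) := by
  obtain ⟨m, c, hc, hyc, hsym⟩ := awaySymbol_spec σ hδ y
  rw [← (isUnit_algebraMap_pow_away (σ d ⟨δ, hδ⟩) m).mul_left_inj, mul_right_comm, hsym]
  have key := congr_arg (algebraMap A (Localization.Away (σ d ⟨δ, hδ⟩)))
    (hσ.map_mul_pow_eq_map_mul_pow hδ hc hb (by ring)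
      (mul_pow_eq_mul_pow_of_mul_pow_eq (hσ.mem_nonZeroDivisors hF hδ hδ₀) hyc hy))
  rwa [map_mul, map_mul, map_pow, map_pow] at key

lemma awaySymbol_eq_of_mul_pow_eq (hσ : IsAssociatedGraded F 𝒜 σ)
    (hF : IsExhaustiveSeparatedFiltration F) (hδ : δ ∈ F d) (hδ₀ : σ d ⟨δ, hδ⟩ ≠ 0) {k : ℤ}
    (y : awayFamily F δ d k) {n : ℕ} {b : R} (hb : b ∈ F (k + n * d))
    (hy : (y : Localization.Away δ) * algebraMap R _ δ ^ n = algebraMap R _ b)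
    {z : Localization.Away (σ d ⟨δ, hδ⟩)}
    (hz : z * algebraMap A _ (σ d ⟨δ, hδ⟩) ^ n = algebraMap A _ (σ _ ⟨b, hb⟩)) :
    awaySymbol σ hδ k y = z := by
  rw [← (isUnit_algebraMap_pow_away (σ d ⟨δ, hδ⟩) n).mul_left_inj,
    awaySymbol_mul_pow hσ hF hδ hδ₀ y hb hy, hz]

lemma awaySymbol_add (hσ : IsAssociatedGraded F 𝒜 σ)
    (hF : IsExhaustiveSeparatedFiltration F) (hδ : δ ∈ F d) (hδ₀ : σ d ⟨δ, hδ⟩ ≠ 0) {k : ℤ}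
    (y z : awayFamily F δ d k) :
    awaySymbol σ hδ k (y + z) = awaySymbol σ hδ k y + awaySymbol σ hδ k z := by
  obtain ⟨n, b, hb, hyb, hy⟩ := awaySymbol_spec σ hδ y
  obtain ⟨m, c, hc, hzc, hz⟩ := awaySymbol_spec σ hδ z
  have hk : k + ((n + m : ℕ) : ℤ) * d = k + n * d + m * d := by push_cast; ring
  have hbm : b * δ ^ m ∈ F (k + ((n + m : ℕ) : ℤ) * d) := hk ▸ mul_pow_mem_add_mul hδ hb m
  have hcn : c * δ ^ n ∈ F (k + ((n + m : ℕ) : ℤ) * d) := by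
    convert mul_pow_mem_add_mul hδ hc n using 2; push_cast; ring
  refine awaySymbol_eq_of_mul_pow_eq hσ hF hδ hδ₀ _ (add_mem hbm hcn) ?_ ?_
  · simp only [AddSubgroup.coe_add, map_add, map_mul, map_pow, ← hyb, ← hzc]; ring
  · change _ = algebraMap A _ (σ _ (⟨_, hbm⟩ + ⟨_, hcn⟩))
    rw [map_add, hσ.map_mul_pow hδ hb hbm hk rfl, hσ.map_mul_pow hδ hc hcn (by rw [hk]; ring) rfl]
    simp only [map_add, map_mul, map_pow, ← hy, ← hz]
    ring

lemma awaySymbol_mul (hσ : IsAssociatedGraded F 𝒜 σ)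
    (hF : IsExhaustiveSeparatedFiltration F) (hδ : δ ∈ F d) (hδ₀ : σ d ⟨δ, hδ⟩ ≠ 0) {k l : ℤ}
    (y : awayFamily F δ d k) (z : awayFamily F δ d l)
    (hyz : (y : Localization.Away δ) * z ∈ awayFamily F δ d (k + l)) :
    awaySymbol σ hδ (k + l) ⟨_, hyz⟩ = awaySymbol σ hδ k y * awaySymbol σ hδ l z := by
  obtain ⟨n, b, hb, hyb, hy⟩ := awaySymbol_spec σ hδ y
  obtain ⟨m, c, hc, hzc, hz⟩ := awaySymbol_spec σ hδ z
  have hbc : b * c ∈ F (k + l + ((n + m : ℕ) : ℤ) * d) := by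
    convert SetLike.mul_mem_graded hb hc using 2; push_cast; ring
  refine awaySymbol_eq_of_mul_pow_eq hσ hF hδ hδ₀ _ hbc ?_ ?_
  · rw [map_mul, ← hyb, ← hzc, pow_add]; ring
  · rw [hσ.map_mul_of_eq hb hc hbc (by push_cast; ring) rfl, map_mul, ← hy, ← hz]; ring

lemma awaySymbol_one (hσ : IsAssociatedGraded F 𝒜 σ)
    (hF : IsExhaustiveSeparatedFiltration F) (hδ : δ ∈ F d) (hδ₀ : σ d ⟨δ, hδ⟩ ≠ 0)
    (h : (1 : Localization.Away δ) ∈ awayFamily F δ d 0) :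
    awaySymbol σ hδ 0 ⟨1, h⟩ = 1 := by
  have h₁ : (1 : R) ∈ F (0 + ((0 : ℕ) : ℤ) * d) := by simpa using SetLike.one_mem_graded F
  refine awaySymbol_eq_of_mul_pow_eq hσ hF hδ hδ₀ _ h₁ (by simp) ?_
  rw [hσ.map_one_of_eq h₁ (by simp) rfl, map_one, pow_zero, mul_one]

lemma awaySymbol_eq_zero_iff (hσ : IsAssociatedGraded F 𝒜 σ)
    (hF : IsExhaustiveSeparatedFiltration F) (hδ : δ ∈ F d) (hδ₀ : σ d ⟨δ, hδ⟩ ≠ 0) {k : ℤ}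
    (y : awayFamily F δ d k) :
    awaySymbol σ hδ k y = 0 ↔ (y : Localization.Away δ) ∈ awayFamily F δ d (k - 1) := by
  obtain ⟨n, b, hb, hyb, hy⟩ := awaySymbol_spec σ hδ y
  have hψ := IsLocalization.injective (Localization.Away (σ d ⟨δ, hδ⟩))
    (powers_le_nonZeroDivisors_of_noZeroDivisors hδ₀)
  rw [mem_awayFamily_iff_of_mul_pow_eq hσ hF hδ hδ₀ hyb, sub_add_eq_add_sub,
    ← hσ.map_eq_zero_iff _ ⟨b, hb⟩, ← (isUnit_algebraMap_pow_away _ n).mul_left_eq_zero, hy,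
    map_eq_zero_iff _ hψ]

lemma awaySymbol_range (hσ : IsAssociatedGraded F 𝒜 σ)
    (hF : IsExhaustiveSeparatedFiltration F) (hδ : δ ∈ F d) (hδ₀ : σ d ⟨δ, hδ⟩ ≠ 0) (k : ℤ) :
    Set.range (awaySymbol σ hδ k) = awayFamily 𝒜 (σ d ⟨δ, hδ⟩) d k := by
  have := hσ.gradedMonoid
  ext z
  constructor
  · rintro ⟨y, rfl⟩
    obtain ⟨n, b, hb, -, hy⟩ := awaySymbol_spec σ hδ y
    exact AddSubgroup.subset_closure ⟨n, _, hσ.map_mem _ _, hy⟩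
  · intro hz
    obtain ⟨n, a, ha, hza⟩ := (mem_awayFamily_iff (hσ.map_mem d _)).1 hz
    rw [← hσ.range_eq] at ha
    obtain ⟨⟨b, hb⟩, rfl⟩ := ha
    have hyb : algebraMap R (Localization.Away δ) b * IsLocalization.Away.invSelf δ ^ n *
        algebraMap R _ δ ^ n = algebraMap R _ b := by
      rw [mul_assoc, mul_comm (_ ^ n), algebraMap_pow_mul_invSelf_pow, mul_one]
    exact ⟨⟨_, AddSubgroup.subset_closure ⟨n, b, hb, hyb⟩⟩,
      awaySymbol_eq_of_mul_pow_eq hσ hF hδ hδ₀ _ hb hyb hza⟩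

lemma isAssociatedGraded_awaySymbol (hσ : IsAssociatedGraded F 𝒜 σ)
    (hF : IsExhaustiveSeparatedFiltration F) (hδ : δ ∈ F d) (hδ₀ : σ d ⟨δ, hδ⟩ ≠ 0) :
    IsAssociatedGraded (awayFamily F δ d) (awayFamily 𝒜 (σ d ⟨δ, hδ⟩) d)
      fun k ↦ AddMonoidHom.mk' (awaySymbol σ hδ k) (awaySymbol_add hσ hF hδ hδ₀) where
  range_eq k := SetLike.coe_injective <|
    (AddMonoidHom.coe_range _).trans (awaySymbol_range hσ hF hδ hδ₀ k)
  map_eq_zero_iff _ := awaySymbol_eq_zero_iff hσ hF hδ hδ₀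
  map_mul _ _ := awaySymbol_mul hσ hF hδ hδ₀
  map_one := awaySymbol_one hσ hF hδ hδ₀

end awaySymbol

theorem stmt3_general {B : Type*} [CommRing B]
    (F : ℤ → AddSubgroup B) (hmono : Monotone F)
    (hexh : ∀ b : B, ∃ i : ℤ, b ∈ F i)
    (hsep : ∀ b : B, (∀ i : ℤ, b ∈ F i) → b = 0)
    (h1 : (1 : B) ∈ F 0)
    (hmulF : ∀ i j : ℤ, ∀ x ∈ F i, ∀ y ∈ F j, x * y ∈ F (i + j))
    -- a presentation of the associated graded ring `A = gr ℬ`, a domain: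
    {A : Type*} [CommRing A] [IsDomain A]
    (𝒜 : ℤ → AddSubgroup A) (hinternal : DirectSum.IsInternal 𝒜)
    (σ : ∀ i : ℤ, F i →+ A)
    (hσrange : ∀ i : ℤ, (σ i).range = 𝒜 i)
    (hσker : ∀ (i : ℤ) (x : F i), σ i x = 0 ↔ (x : B) ∈ F (i - 1))
    (hσmul : ∀ (i j : ℤ) (x : F i) (y : F j)
      (hxy : (x : B) * (y : B) ∈ F (i + j)),
      σ (i + j) ⟨(x : B) * (y : B), hxy⟩ = σ i x * σ j y)
    (hσone : ∀ h : (1 : B) ∈ F 0, σ 0 ⟨1, h⟩ = 1)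
    -- the element `δ` and its symbol `δ̄`:
    (d : ℤ) (δ : B) (hδ : δ ∈ F d) (hδ' : δ ∉ F (d - 1)) :
    ∀ δbar : A, δbar = σ d ⟨δ, hδ⟩ →
    -- the natural filtration on `ℬ_δ`:
    ∀ G : ℤ → AddSubgroup (Localization.Away δ),
      (∀ k : ℤ, G k = AddSubgroup.closure
        {y : Localization.Away δ | ∃ (n : ℕ) (b : B), b ∈ F (k + (n : ℤ) * d) ∧
          y * (algebraMap B (Localization.Away δ) δ) ^ n =
            algebraMap B (Localization.Away δ) b}) →
    -- the natural grading on `(gr ℬ)_{δ̄}`: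
    ∀ H : ℤ → AddSubgroup (Localization.Away δbar),
      (∀ k : ℤ, H k = AddSubgroup.closure
        {y : Localization.Away δbar | ∃ (n : ℕ) (a : A), a ∈ 𝒜 (k + (n : ℤ) * d) ∧
          y * (algebraMap A (Localization.Away δbar) δbar) ^ n =
            algebraMap A (Localization.Away δbar) a}) →
      -- `G` is a ring filtration …
      Monotone G ∧ (∀ y : Localization.Away δ, ∃ k : ℤ, y ∈ G k) ∧
      (∀ y : Localization.Away δ, (∀ k : ℤ, y ∈ G k) → y = 0) ∧
      (1 : Localization.Away δ) ∈ G 0 ∧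
      (∀ k l : ℤ, ∀ x ∈ G k, ∀ y ∈ G l, x * y ∈ G (k + l)) ∧
      -- … `H` is an (internal) grading, and `(gr ℬ)_{δ̄}` with grading `H` is an
      -- associated graded of `(ℬ_δ, G)` via symbol maps `τ`; this says precisely that
      -- `gr(ℬ_δ) ≅ (gr ℬ)_{δ̄}` as graded rings:
      DirectSum.IsInternal H ∧
      ∃ τ : ∀ k : ℤ, G k →+ Localization.Away δbar,
        (∀ k : ℤ, (τ k).range = H k) ∧
        (∀ (k : ℤ) (y : G k), τ k y = 0 ↔ (y : Localization.Away δ) ∈ G (k - 1)) ∧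
        (∀ (k l : ℤ) (x : G k) (y : G l)
          (hxy : (x : Localization.Away δ) * (y : Localization.Away δ) ∈ G (k + l)),
          τ (k + l) ⟨(x : Localization.Away δ) * (y : Localization.Away δ), hxy⟩ =
            τ k x * τ l y) ∧
        (∀ h : (1 : Localization.Away δ) ∈ G 0, τ 0 ⟨1, h⟩ = 1) := by
  intro δbar hδbar G hG H hH
  subst hδbar
  obtain rfl : G = awayFamily F δ d := funext hG
  obtain rfl : H = awayFamily 𝒜 (σ d ⟨δ, hδ⟩) d := funext hH
  have : SetLike.GradedMonoid F :=
    { one_mem := h1, mul_mem := fun i j _ _ hx hy ↦ hmulF i j _ hx _ hy }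
  have hF : IsExhaustiveSeparatedFiltration F := ⟨hmono, hexh, hsep⟩
  have hσ : IsAssociatedGraded F 𝒜 σ := ⟨hσrange, hσker, hσmul, hσone⟩
  have := hσ.gradedMonoid
  have hδ₀ : σ d ⟨δ, hδ⟩ ≠ 0 := (hσker d _).not.2 hδ'
  obtain ⟨hGmono, hGexh, hGsep⟩ := isExhaustiveSeparatedFiltration_awayFamily hσ hF hδ hδ₀
  obtain ⟨hτrange, hτker, hτmul, hτone⟩ := isAssociatedGraded_awaySymbol hσ hF hδ hδ₀
  exact ⟨hGmono, hGexh, hGsep, one_mem_awayFamily, fun _ _ _ hx _ hy ↦ mul_mem_awayFamily hδ hx hy,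
    isInternal_awayFamily hinternal (hσ.map_mem d _) (mem_nonZeroDivisors_of_ne_zero hδ₀),
    _, hτrange, hτker, hτmul, hτone⟩

/-- Let `ℬ` be a `ℤ`-filtered commutative ring whose associated graded ring is a domain,
with `1 ∈ ℬ_0 \ ℬ_{-1}`, and let `δ ∈ ℬ_d \ ℬ_{d-1}` with symbol `δ̄ ∈ gr ℬ`.  Present
`gr ℬ` as a graded domain `A = ⊕ 𝒜_i` via symbol maps `σ_i : ℬ_i → A` (surjective onto
`𝒜_i`, kernel `ℬ_{i-1}`, multiplicative and unital).  Give the localization `ℬ_δ` the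
natural filtration `G` in which `b/δ^n` has degree `≤ k` whenever `b ∈ ℬ_{k+nd}`, and the
localization `(gr ℬ)_{δ̄}` the grading `H` with `H_k` generated by `ā/δ̄^n` for
`ā ∈ 𝒜_{k+nd}`.  Then `G` is a ring filtration and there is an isomorphism of graded
rings `gr(ℬ_δ) ≅ (gr ℬ)_{δ̄}`, i.e. `(gr ℬ)_{δ̄}` together with its grading `H` is an
associated graded of the filtered ring `(ℬ_δ, G)` via symbol maps `τ_k`. -/
theorem stmt3 {B : Type*} [CommRing B]
    (F : ℤ → AddSubgroup B) (hmono : Monotone F)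
    (hexh : ∀ b : B, ∃ i : ℤ, b ∈ F i)
    (hsep : ∀ b : B, (∀ i : ℤ, b ∈ F i) → b = 0)
    (h1 : (1 : B) ∈ F 0) (h1' : (1 : B) ∉ F (-1))
    (hmulF : ∀ i j : ℤ, ∀ x ∈ F i, ∀ y ∈ F j, x * y ∈ F (i + j))
    -- a presentation of the associated graded ring `A = gr ℬ`, a domain:
    {A : Type*} [CommRing A] [IsDomain A]
    (𝒜 : ℤ → AddSubgroup A) (hinternal : DirectSum.IsInternal 𝒜)
    (σ : ∀ i : ℤ, F i →+ A)
    (hσrange : ∀ i : ℤ, (σ i).range = 𝒜 i)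
    (hσker : ∀ (i : ℤ) (x : F i), σ i x = 0 ↔ (x : B) ∈ F (i - 1))
    (hσmul : ∀ (i j : ℤ) (x : F i) (y : F j)
      (hxy : (x : B) * (y : B) ∈ F (i + j)),
      σ (i + j) ⟨(x : B) * (y : B), hxy⟩ = σ i x * σ j y)
    (hσone : ∀ h : (1 : B) ∈ F 0, σ 0 ⟨1, h⟩ = 1)
    -- the element `δ` and its symbol `δ̄`:
    (d : ℤ) (δ : B) (hδ : δ ∈ F d) (hδ' : δ ∉ F (d - 1)) :
    ∀ δbar : A, δbar = σ d ⟨δ, hδ⟩ →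
    -- the natural filtration on `ℬ_δ`:
    ∀ G : ℤ → AddSubgroup (Localization.Away δ),
      (∀ k : ℤ, G k = AddSubgroup.closure
        {y : Localization.Away δ | ∃ (n : ℕ) (b : B), b ∈ F (k + (n : ℤ) * d) ∧
          y * (algebraMap B (Localization.Away δ) δ) ^ n =
            algebraMap B (Localization.Away δ) b}) →
    -- the natural grading on `(gr ℬ)_{δ̄}`:
    ∀ H : ℤ → AddSubgroup (Localization.Away δbar),
      (∀ k : ℤ, H k = AddSubgroup.closure
        {y : Localization.Away δbar | ∃ (n : ℕ) (a : A), a ∈ 𝒜 (k + (n : ℤ) * d) ∧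
          y * (algebraMap A (Localization.Away δbar) δbar) ^ n =
            algebraMap A (Localization.Away δbar) a}) →
      -- `G` is a ring filtration …
      Monotone G ∧ (∀ y : Localization.Away δ, ∃ k : ℤ, y ∈ G k) ∧
      (∀ y : Localization.Away δ, (∀ k : ℤ, y ∈ G k) → y = 0) ∧
      (1 : Localization.Away δ) ∈ G 0 ∧
      (∀ k l : ℤ, ∀ x ∈ G k, ∀ y ∈ G l, x * y ∈ G (k + l)) ∧
      -- … `H` is an (internal) grading, and `(gr ℬ)_{δ̄}` with grading `H` is an
      -- associated graded of `(ℬ_δ, G)` via symbol maps `τ`; this says precisely that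
      -- `gr(ℬ_δ) ≅ (gr ℬ)_{δ̄}` as graded rings:
      DirectSum.IsInternal H ∧
      ∃ τ : ∀ k : ℤ, G k →+ Localization.Away δbar,
        (∀ k : ℤ, (τ k).range = H k) ∧
        (∀ (k : ℤ) (y : G k), τ k y = 0 ↔ (y : Localization.Away δ) ∈ G (k - 1)) ∧
        (∀ (k l : ℤ) (x : G k) (y : G l)
          (hxy : (x : Localization.Away δ) * (y : Localization.Away δ) ∈ G (k + l)),
          τ (k + l) ⟨(x : Localization.Away δ) * (y : Localization.Away δ), hxy⟩ =
            τ k x * τ l y) ∧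
        (∀ h : (1 : Localization.Away δ) ∈ G 0, τ 0 ⟨1, h⟩ = 1) :=
  stmt3_general F hmono hexh hsep h1 hmulF 𝒜 hinternal σ hσrange hσker hσmul hσone d δ hδ hδ'
end

section
/- Let 𝕜 be an algebraically closed field, N ≥ 1, and X ∈ M_N(𝕜). The conjugation orbit GL_N(𝕜)·X ⊆ M_N(𝕜) is stable under scalar multiplication by all t ∈ 𝕜 \ {0} (i.e. tX is conjugate to X for every t ≠ 0) if and only if X is nilpotent. -/
open Matrix

/-!
If `tX` is conjugate to `X` for every `t ≠ 0`, the spectrum of `X` is a finite set stable under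
multiplication by every nonzero scalar, hence contained in `{0}`; over an algebraically closed
field this forces the characteristic polynomial to be `X ^ N`, so `X` is nilpotent.

Conversely, a nilpotent endomorphism `f` makes `V` a finitely generated `𝕜[X]`-module annihilated by a power
of the prime `X`, hence a direct sum of cyclic modules `𝕜[X] ⧸ (X ^ e)`. The substitution
`X ↦ tX` preserves each ideal `(X ^ e)`, so it induces `𝕜`-linear automorphisms of the summands
that turn the action of `X` into that of `tX`; assembled and transported back to `V` they
conjugate `f` to `t • f`.
-/

open Polynomial
open scoped Pointwise

theorem isConj_map_iff {F α β : Type*} [Monoid α] [Monoid β] [EquivLike F α β]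
    [MulEquivClass F α β] (e : F) {a b : α} : IsConj (e a) (e b) ↔ IsConj a b :=
  ⟨fun h ↦ by simpa using (e : α ≃* β).symm.toMonoidHom.map_isConj h,
    (e : α →* β).map_isConj⟩

theorem IsConj.spectrum_eq {R A : Type*} [CommSemiring R] [Ring A] [Algebra R A] {a b : A}
    (h : IsConj a b) : spectrum R a = spectrum R b := by
  obtain ⟨u, hu⟩ := h
  rw [← spectrum.units_conjugate (a := a) (u := u), hu.eq, Units.mul_inv_cancel_right]

theorem Set.Finite.subset_zero_of_forall_units_smul_eq {K : Type*} [Field K] [Infinite K]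
    {S : Set K} (hS : S.Finite) (h : ∀ t : Kˣ, t • S = S) : S ⊆ {0} := by
  intro μ hμ
  by_contra hμ0
  have hcover : ({0}ᶜ : Set K) ⊆ (· * μ⁻¹) '' S := fun t ht ↦
    ⟨t * μ, h (Units.mk0 t ht) ▸ Set.smul_mem_smul_set (a := Units.mk0 t ht) hμ,
      by field_simp [Set.mem_singleton_iff.not.mp hμ0]⟩
  exact (Set.finite_singleton 0).infinite_compl ((hS.image _).subset hcover)

theorem Polynomial.Monic.eq_X_pow_of_forall_isRoot {K : Type*} [Field K] {p : K[X]}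
    (hp : p.Monic) (hs : p.Splits) (h : ∀ a, p.IsRoot a → a = 0) : p = X ^ p.natDegree := by
  have hroots : p.roots = Multiset.replicate p.natDegree 0 :=
    Multiset.eq_replicate.2
      ⟨hs.natDegree_eq_card_roots.symm, fun a ha ↦ h a (isRoot_of_mem_roots ha)⟩
  conv_lhs => rw [hs.eq_prod_roots_of_monic hp, hroots]
  simp

theorem DFinsupp.mapRange_linearEquiv_smul {S R ι : Type*} [Semiring S] [Semiring R]
    [DecidableEq ι] {M : ι → Type*} [∀ i, AddCommMonoid (M i)] [∀ i, Module S (M i)]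
    [∀ i, Module R (M i)] (D : ∀ i, M i ≃ₗ[S] M i) {r s : R}
    (hD : ∀ i m, D i (r • m) = s • D i m) (w : Π₀ i, M i) :
    DFinsupp.mapRange.linearEquiv D (r • w) = s • DFinsupp.mapRange.linearEquiv D w := by
  ext i
  simp [hD]

theorem Polynomial.exists_linearEquiv_quotient_X_pow {K : Type*} [Field K] {t : K} (ht : t ≠ 0)
    (e : ℕ) :
    ∃ D : (K[X] ⧸ K[X] ∙ (X ^ e : K[X])) ≃ₗ[K] (K[X] ⧸ K[X] ∙ (X ^ e : K[X])),
      ∀ m, D ((X : K[X]) • m) = (t • X : K[X]) • D m := by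
  let _ := invertibleOfNonzero ht
  let σ := algEquivCMulXAddC t (0 : K)
  have hσX : σ X = t • X := by simp [σ, smul_eq_C_mul]
  have hσ : Ideal.span {(X ^ e : K[X])} = (Ideal.span {X ^ e}).map (σ : K[X] →+* K[X]) := by
    rw [Ideal.map_span, Set.image_singleton, RingHom.coe_coe, map_pow, hσX, _root_.smul_pow,
      smul_eq_C_mul, Ideal.span_singleton_mul_left_unit (isUnit_C.2 (pow_ne_zero e ht).isUnit)]
  refine ⟨(Ideal.quotientEquivAlg _ _ σ hσ).toLinearEquiv, fun m ↦ ?_⟩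
  obtain ⟨q, rfl⟩ := Ideal.Quotient.mk_surjective m
  change Ideal.quotientEquivAlg _ _ σ hσ (Ideal.Quotient.mk _ (X * q)) =
    Ideal.Quotient.mk _ (t • X * σ q)
  rw [Ideal.quotientEquivAlg_mk, map_mul, hσX]

namespace Module.End

variable {K V : Type*} [Field K] [AddCommGroup V] [Module K V]

theorem isNilpotent_of_spectrum_subset_zero [IsAlgClosed K] [FiniteDimensional K V]
    {f : End K V} (h : spectrum K f ⊆ {0}) : IsNilpotent f := by
  rw [LinearMap.isNilpotent_iff_charpoly, ← LinearMap.charpoly_natDegree]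
  exact f.charpoly_monic.eq_X_pow_of_forall_isRoot (IsAlgClosed.splits _)
    fun μ hμ ↦ h ((mem_spectrum_iff_isRoot_charpoly f μ).2 hμ)

theorem isNilpotent_of_forall_isConj_smul [IsAlgClosed K] [FiniteDimensional K V]
    {f : End K V} (h : ∀ t : K, t ≠ 0 → IsConj f (t • f)) : IsNilpotent f :=
  isNilpotent_of_spectrum_subset_zero <| f.finite_spectrum.subset_zero_of_forall_units_smul_eq
    fun t ↦ by
      rw [← spectrum.unit_smul_eq_smul, Units.smul_def]
      exact (h t t.ne_zero).spectrum_eq.symm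

theorem isTorsion'_powers_X_of_isNilpotent {f : End K V} (hf : IsNilpotent f) :
    IsTorsion' (AEval' f) (Submonoid.powers (X : K[X])) := by
  obtain ⟨n, hn⟩ := hf
  intro m
  obtain ⟨v, rfl⟩ := (AEval'.of f).surjective m
  refine ⟨⟨X ^ n, pow_mem (Submonoid.mem_powers X) n⟩, ?_⟩
  rw [Submonoid.smul_def, AEval'.X_pow_smul_of, hn, zero_smul, map_zero]

theorem isConj_smul_of_linearEquiv_X_smul {f : End K V} {t : K} {M : Type*}
    [AddCommGroup M] [Module K[X] M] [Module K M] [IsScalarTower K K[X] M]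
    (Φ : AEval' f ≃ₗ[K[X]] M) (D : M ≃ₗ[K] M)
    (hD : ∀ m, D ((X : K[X]) • m) = (t • X : K[X]) • D m) :
    IsConj f (t • f) := by
  let g : V ≃ₗ[K] V := (AEval'.of f).trans <| (Φ.restrictScalars K).trans <|
    D.trans <| (Φ.restrictScalars K).symm.trans (AEval'.of f).symm
  refine ⟨LinearMap.GeneralLinearGroup.ofLinearEquiv g, LinearMap.ext fun v ↦ ?_⟩
  change g (f v) = t • f (g v)
  simp only [g, LinearEquiv.trans_apply, LinearEquiv.restrictScalars_apply,
    LinearEquiv.restrictScalars_symm_apply, ← AEval'.X_smul_of, map_smul, hD, smul_assoc]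
  rw [← AEval'.of_symm_X_smul]

theorem isConj_smul_of_isNilpotent [FiniteDimensional K V] {f : End K V} (hf : IsNilpotent f)
    {t : K} (ht : t ≠ 0) : IsConj f (t • f) := by
  classical
  obtain ⟨d, e, ⟨Φ⟩⟩ := torsion_by_prime_power_decomposition irreducible_X
    (isTorsion'_powers_X_of_isNilpotent hf)
  choose D hD using fun i ↦ exists_linearEquiv_quotient_X_pow ht (e i)
  exact isConj_smul_of_linearEquiv_X_smul Φ (DFinsupp.mapRange.linearEquiv D)
    (DFinsupp.mapRange_linearEquiv_smul D hD)

end Module.End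

theorem stmt10_general {𝕜 : Type*} [Field 𝕜] [IsAlgClosed 𝕜] (N : ℕ)
    (X : Matrix (Fin N) (Fin N) 𝕜) :
    (∀ t : 𝕜, t ≠ 0 → ∃ g : GeneralLinearGroup (Fin N) 𝕜,
        t • X = (g : Matrix (Fin N) (Fin N) 𝕜) * X * ((g⁻¹ : GeneralLinearGroup (Fin N) 𝕜) : Matrix (Fin N) (Fin N) 𝕜)) ↔
      IsNilpotent X := by
  let φ : Matrix (Fin N) (Fin N) 𝕜 ≃ₐ[𝕜] Module.End 𝕜 (Fin N → 𝕜) := toLinAlgEquiv'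
  have hconj (t : 𝕜) : (∃ g : GeneralLinearGroup (Fin N) 𝕜,
      t • X = (g : Matrix (Fin N) (Fin N) 𝕜) * X * ((g⁻¹ : GeneralLinearGroup (Fin N) 𝕜) :
        Matrix (Fin N) (Fin N) 𝕜)) ↔ IsConj (φ X) (t • φ X) := by
    rw [← map_smul, isConj_map_iff]
    exact exists_congr fun g ↦ by rw [eq_comm, Units.mul_inv_eq_iff_eq_mul]; rfl
  simp only [hconj, ← IsNilpotent.map_iff φ.injective]
  exact ⟨Module.End.isNilpotent_of_forall_isConj_smul, fun hX t ht ↦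
    Module.End.isConj_smul_of_isNilpotent hX ht⟩

/-- Over an algebraically closed field `𝕜` and for `N ≥ 1`, a matrix `X ∈ M_N(𝕜)` has
conjugation orbit stable under all nonzero scalar multiplications (i.e. `tX` is conjugate
to `X` for every `t ≠ 0`) if and only if `X` is nilpotent. -/
theorem stmt10 {𝕜 : Type*} [Field 𝕜] [IsAlgClosed 𝕜] (N : ℕ) (hN : 1 ≤ N)
    (X : Matrix (Fin N) (Fin N) 𝕜) :
    (∀ t : 𝕜, t ≠ 0 → ∃ g : GeneralLinearGroup (Fin N) 𝕜,
        t • X = (g : Matrix (Fin N) (Fin N) 𝕜) * X * ((g⁻¹ : GeneralLinearGroup (Fin N) 𝕜) : Matrix (Fin N) (Fin N) 𝕜)) ↔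
      IsNilpotent X :=
  stmt10_general N X
end

section
/- Fix a pyramid 𝛑 of shape a partition 𝛌 ⊢ N, and let Tab^cc_𝕜(𝛑) denote the set of column-connected fillings of 𝛑 with entries in a field 𝕜 of characteristic 0 (or any field, treating '+1' in the prime field). Let W_row ⊆ S_N be the subgroup of permutations preserving each row of 𝛑, and W_col ⊆ S_N the subgroup generated by column-swaps (permutations exchanging entire columns of equal height). Then two column-connected tableaux A, A' ∈ Tab^cc_𝕜(𝛑) lie in the same W_row-orbit if and only if they lie in the same W_col-orbit. -/
/-!
Along a column of a column-connected tableau `A b + row b` is constant; call it the value of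
the column. A row-preserving permutation keeps the multiset of pairs (row, value) over all
boxes. Every box is either the top box of its column or sits directly below another box, so the
multiset of pairs (top row, value) over the columns is the box multiset minus its shift down by
one row, and is therefore determined by it. Two tableaux in the same `W_row`-orbit thus differ by
a permutation of the columns preserving top rows, hence column shapes; such a permutation is a
product of transpositions of columns of equal shape, i.e. of column swaps. Conversely, column
swaps preserve rows.
-/

open Equiv Equiv.Perm MulAction Subgroup

namespace Equiv.Perm

variable {α β γ : Type*}

def fiberwise (ρ : α → β) : Subgroup (Perm α) where
  carrier := {σ | ∀ a, ρ (σ a) = ρ a}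
  one_mem' _ := rfl
  mul_mem' hσ hτ a := (hσ _).trans (hτ a)
  inv_mem' {σ} hσ a := by simpa using (hσ (σ⁻¹ a)).symm

theorem mem_closure_isSwap_fiberwise [DecidableEq α] {ρ : α → β} {f : Perm α}
    (hf : f ∈ fiberwise ρ) (hfin : (fixedBy α f)ᶜ.Finite) :
    f ∈ closure {σ | σ.IsSwap ∧ σ ∈ fiberwise ρ} := by
  refine (mem_closure_isSwap fun _ h ↦ h.1).2 ⟨hfin, fun x ↦ ?_⟩
  by_cases hx : f x = x
  · rw [hx]; exact mem_orbit_self x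
  have hswap : swap x (f x) ∈ fiberwise ρ := fun y ↦ by
    have := hf x
    rw [swap_apply_def]; split_ifs <;> simp_all
  exact ⟨⟨swap x (f x), subset_closure ⟨⟨x, f x, Ne.symm hx, rfl⟩, hswap⟩⟩, swap_apply_left x (f x)⟩

theorem map_univ_val_comp_of_mem_fiberwise [Fintype α] {ρ : α → β} {σ : Perm α}
    (hσ : σ ∈ fiberwise ρ) (f : α → γ) :
    Finset.univ.val.map (fun a ↦ (ρ a, f (σ a))) = Finset.univ.val.map (fun a ↦ (ρ a, f a)) := by
  have : (fun a ↦ (ρ a, f (σ a))) = (fun a ↦ (ρ a, f a)) ∘ σ := funext fun a ↦ by simp [hσ a]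
  rw [this, ← Multiset.map_map, Multiset.map_univ_val_equiv]

theorem exists_perm_of_map_eq {s : Finset α} {f g : α → γ} (h : s.val.map f = s.val.map g) :
    ∃ e : Perm α, (∀ x ∉ s, e x = x) ∧ ∀ x ∈ s, e x ∈ s ∧ f (e x) = g x := by
  classical
  have hs : Finset.univ.val.map (fun x : s ↦ f x) = Finset.univ.val.map (fun x : s ↦ g x) := by
    rw [Finset.univ_eq_attach, Finset.attach_val]
    exact (Multiset.attach_map_val' _ f).trans (h.trans (Multiset.attach_map_val' _ g).symm)
  have hcard (y : γ) : Fintype.card {x : s // g x = y} = Fintype.card {x : s // f x = y} := by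
    have := congrArg (Multiset.count y) hs
    simp only [Multiset.count_map, eq_comm (a := y)] at this
    rw [Fintype.card_subtype, Fintype.card_subtype]
    exact this.symm
  let e₀ : Perm s := ofFiberEquiv fun y ↦ Fintype.equivOfCardEq (hcard y)
  refine ⟨ofSubtype e₀, fun x hx ↦ ofSubtype_apply_of_not_mem e₀ hx, fun x hx ↦ ?_⟩
  rw [ofSubtype_apply_of_mem e₀ hx]
  exact ⟨(e₀ _).2, ofFiberEquiv_map (f := fun x : s ↦ g x) (g := fun x : s ↦ f x) _ ⟨x, hx⟩⟩

end Equiv.Perm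

structure IsPyramid (n : ℕ) (P : Finset (ℤ × ℕ)) : Prop where
  row_lt : ∀ b ∈ P, b.2 < n
  mem_of_mem_above : ∀ (c : ℤ) (r : ℕ), (c, r) ∈ P → r + 1 < n → (c, r + 1) ∈ P

section Pyramid

variable {n : ℕ} {P : Finset (ℤ × ℕ)} {𝕜 β : Type*}

def colShape (P : Finset (ℤ × ℕ)) (c : ℤ) : Set ℕ := {r | (c, r) ∈ P}

noncomputable def colTop (P : Finset (ℤ × ℕ)) (c : ℤ) : ℕ := sInf (colShape P c)

/-- The constant value of `A b + row b` along column `c` (`0` if the column is empty). -/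
noncomputable def colVal [AddMonoidWithOne 𝕜] (A : {b // b ∈ P} → 𝕜) (c : ℤ) : 𝕜 :=
  if h : (c, colTop P c) ∈ P then A ⟨_, h⟩ + colTop P c else 0

def IsColConnected [Add 𝕜] [One 𝕜] (A : {b // b ∈ P} → 𝕜) : Prop :=
  ∀ (c : ℤ) (r : ℕ) (h1 : (c, r) ∈ P) (h2 : (c, r + 1) ∈ P),
    A ⟨(c, r), h1⟩ = A ⟨(c, r + 1), h2⟩ + 1

def IsColSwap (σ : Perm {b // b ∈ P}) : Prop :=
  ∃ c₁ c₂ : ℤ, (∀ r : ℕ, (c₁, r) ∈ P ↔ (c₂, r) ∈ P) ∧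
    ∀ b : {b // b ∈ P},
      (σ b : ℤ × ℕ) =
        if (b : ℤ × ℕ).1 = c₁ then (c₂, (b : ℤ × ℕ).2)
        else if (b : ℤ × ℕ).1 = c₂ then (c₁, (b : ℤ × ℕ).2)
        else (b : ℤ × ℕ)

theorem colTop_mem {c : ℤ} (hc : c ∈ P.image Prod.fst) : (c, colTop P c) ∈ P := by
  obtain ⟨⟨c, r⟩, h, rfl⟩ := Finset.mem_image.1 hc
  exact Nat.sInf_mem (s := colShape P c) ⟨r, h⟩

theorem IsPyramid.mem_iff_colTop_le (hP : IsPyramid n P) {c : ℤ} (hc : c ∈ P.image Prod.fst)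
    (r : ℕ) : (c, r) ∈ P ↔ colTop P c ≤ r ∧ r < n := by
  refine ⟨fun h ↦ ⟨Nat.sInf_le h, hP.row_lt _ h⟩, fun ⟨hle, hlt⟩ ↦ ?_⟩
  induction r, hle using Nat.le_induction with
  | base => exact colTop_mem hc
  | succ r _ ih => exact hP.mem_of_mem_above c r (ih (by omega) (by omega)) hlt

theorem IsPyramid.colShape_eq_of_colTop_eq (hP : IsPyramid n P) {c d : ℤ}
    (hc : c ∈ P.image Prod.fst) (hd : d ∈ P.image Prod.fst) (h : colTop P c = colTop P d) :
    colShape P c = colShape P d :=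
  Set.ext fun r ↦ by
    change (c, r) ∈ P ↔ (d, r) ∈ P
    rw [hP.mem_iff_colTop_le hc, hP.mem_iff_colTop_le hd, h]

theorem IsPyramid.apply_add_eq_colVal [AddCommMonoidWithOne 𝕜] (hP : IsPyramid n P)
    {A : {b // b ∈ P} → 𝕜} (hA : IsColConnected A) (b : {b // b ∈ P}) :
    A b + b.1.2 = colVal A b.1.1 := by
  obtain ⟨⟨c, r⟩, h⟩ := b
  have hc : c ∈ P.image Prod.fst := Finset.mem_image_of_mem Prod.fst h
  rw [colVal, dif_pos (colTop_mem hc)]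
  obtain ⟨hle, hlt⟩ := (hP.mem_iff_colTop_le hc r).1 h
  induction r, hle using Nat.le_induction with
  | base => rfl
  | succ r hr ih =>
    have h' : (c, r) ∈ P := (hP.mem_iff_colTop_le hc r).2 ⟨hr, by omega⟩
    rw [← ih h' (by omega), hA c r h' h]
    push_cast
    abel

/-- Every box is either the top box of its column or lies directly below another box. -/
theorem IsPyramid.val_eq_map_colTop_add (hP : IsPyramid n P) :
    P.val = (P.image Prod.fst).val.map (fun c ↦ (c, colTop P c)) +
      (P.filter (·.2 + 1 < n)).val.map (fun b ↦ (b.1, b.2 + 1)) := by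
  have hnodup_top : ((P.image Prod.fst).val.map fun c ↦ (c, colTop P c)).Nodup :=
    (P.image Prod.fst).nodup.map fun _ _ h ↦ congrArg Prod.fst h
  have hnodup_shift : ((P.filter (·.2 + 1 < n)).val.map fun b ↦ (b.1, b.2 + 1)).Nodup :=
    (P.filter (·.2 + 1 < n)).nodup.map fun b b' h ↦ by
      simp only [Prod.mk.injEq, add_left_inj] at h
      exact Prod.ext h.1 h.2
  have hdisj : Disjoint ((P.image Prod.fst).val.map (fun c ↦ (c, colTop P c)))
      ((P.filter (·.2 + 1 < n)).val.map (fun b ↦ (b.1, b.2 + 1))) := by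
    refine Multiset.disjoint_left.2 fun {x} hx hx' ↦ ?_
    simp only [Multiset.mem_map, Finset.mem_val, Finset.mem_filter] at hx hx'
    obtain ⟨c, -, rfl⟩ := hx
    obtain ⟨⟨d, r⟩, ⟨hdr, -⟩, hx'⟩ := hx'
    simp only [Prod.mk.injEq] at hx'
    obtain ⟨rfl, htop⟩ := hx'
    have : colTop P d ≤ r := Nat.sInf_le hdr
    omega
  refine (Multiset.Nodup.ext P.nodup
    (Multiset.nodup_add.2 ⟨hnodup_top, hnodup_shift, hdisj⟩)).2 fun ⟨c, r⟩ ↦ ?_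
  simp only [Multiset.mem_add, Multiset.mem_map, Finset.mem_val, Finset.mem_filter, Prod.mk.injEq]
  constructor
  · intro h
    have hc : c ∈ P.image Prod.fst := Finset.mem_image_of_mem Prod.fst h
    obtain ⟨hle, hlt⟩ := (hP.mem_iff_colTop_le hc r).1 h
    rcases hle.eq_or_lt with heq | hlt'
    · exact Or.inl ⟨c, hc, rfl, heq⟩
    · refine Or.inr ⟨(c, r - 1), ⟨(hP.mem_iff_colTop_le hc _).2 ⟨by omega, by omega⟩, ?_⟩, rfl, ?_⟩
      all_goals dsimp only; omega
  · rintro (⟨c, hc, rfl, rfl⟩ | ⟨⟨c, r⟩, ⟨h, hlt⟩, rfl, rfl⟩)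
    · exact colTop_mem hc
    · exact hP.mem_of_mem_above c r h hlt

theorem IsPyramid.map_colTop_eq_of_map_row_eq (hP : IsPyramid n P) {u u' : ℤ → β}
    (h : P.val.map (fun b ↦ (b.2, u b.1)) = P.val.map (fun b ↦ (b.2, u' b.1))) :
    (P.image Prod.fst).val.map (fun c ↦ (colTop P c, u c)) =
      (P.image Prod.fst).val.map (fun c ↦ (colTop P c, u' c)) := by
  have key (v : ℤ → β) : P.val.map (fun b ↦ (b.2, v b.1)) =
      (P.image Prod.fst).val.map (fun c ↦ (colTop P c, v c)) +
        ((P.val.map (fun b ↦ (b.2, v b.1))).filter (·.1 + 1 < n)).map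
          (fun x ↦ (x.1 + 1, x.2)) := by
    conv_lhs => rw [hP.val_eq_map_colTop_add]
    simp [Multiset.map_add, Multiset.map_map, Multiset.filter_map]
  have hu := key u
  rw [h] at hu
  exact add_right_cancel (hu.symm.trans (key u'))

def liftCols (P : Finset (ℤ × ℕ)) : fiberwise (colShape P) →* Perm {b // b ∈ P} where
  toFun g := (g.1.prodCongr (Equiv.refl ℕ)).subtypeEquiv fun b ↦ (Set.ext_iff.1 (g.2 b.1) b.2).symm
  map_one' := rfl
  map_mul' _ _ := rfl

theorem liftCols_apply (g : fiberwise (colShape P)) (b : {b // b ∈ P}) :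
    (liftCols P g b : ℤ × ℕ) = (g.1 b.1.1, b.1.2) :=
  rfl

theorem isColSwap_liftCols {g : Perm ℤ} (hg : g.IsSwap ∧ g ∈ fiberwise (colShape P)) :
    IsColSwap (liftCols P ⟨g, hg.2⟩) := by
  obtain ⟨⟨c₁, c₂, -, rfl⟩, hshape⟩ := hg
  have h₁₂ : colShape P c₁ = colShape P c₂ := by simpa using (hshape c₁).symm
  refine ⟨c₁, c₂, fun r ↦ Set.ext_iff.1 h₁₂ r, fun b ↦ ?_⟩
  rw [liftCols_apply, swap_apply_def]
  split_ifs <;> rfl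

theorem liftCols_mem_closure {g : Perm ℤ} (hg : g ∈ fiberwise (colShape P))
    (hfin : (fixedBy ℤ g)ᶜ.Finite) :
    liftCols P ⟨g, hg⟩ ∈ closure {σ | IsColSwap σ} := by
  have hle : closure {σ : Perm ℤ | σ.IsSwap ∧ σ ∈ fiberwise (colShape P)} ≤
      fiberwise (colShape P) := (closure_le _).2 fun _ h ↦ h.2
  refine closure_induction (p := fun g hg ↦ liftCols P ⟨g, hle hg⟩ ∈ closure {σ | IsColSwap σ})
    (fun g hg ↦ subset_closure (isColSwap_liftCols hg)) ?_ (fun g g' _ _ ih ih' ↦ ?_)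
    (fun g _ ih ↦ ?_) (mem_closure_isSwap_fiberwise hg hfin)
  · exact (map_one (liftCols P)).symm ▸ one_mem _
  · exact (map_mul (liftCols P) ⟨g, _⟩ ⟨g', _⟩).symm ▸ mul_mem ih ih'
  · exact (map_inv (liftCols P) ⟨g, _⟩).symm ▸ inv_mem ih

theorem closure_isColSwap_le_fiberwise :
    closure {σ | IsColSwap σ} ≤ fiberwise fun b : {b // b ∈ P} ↦ b.1.2 :=
  (closure_le _).2 fun σ ⟨c₁, c₂, _, hσ⟩ b ↦ by
    change (σ b : ℤ × ℕ).2 = _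
    rw [hσ b]
    split_ifs <;> rfl

theorem IsPyramid.map_colVal_eq [AddCommMonoidWithOne 𝕜] (hP : IsPyramid n P)
    {A : {b // b ∈ P} → 𝕜} (hA : IsColConnected A) :
    P.val.map (fun b ↦ (b.2, colVal A b.1)) =
      (Finset.univ.val.map fun b : {b // b ∈ P} ↦ (b.1.2, A b)).map
        fun x ↦ (x.1, x.2 + (x.1 : 𝕜)) := by
  rw [Multiset.map_map, Finset.univ_eq_attach, Finset.attach_val]
  refine (Multiset.attach_map_val' _ _).symm.trans (Multiset.map_congr rfl fun b _ ↦ ?_)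
  exact congrArg (Prod.mk _) (hP.apply_add_eq_colVal hA b).symm

theorem IsPyramid.exists_colPerm [AddCommMonoidWithOne 𝕜] (hP : IsPyramid n P)
    {A : {b // b ∈ P} → 𝕜} {σ : Perm {b // b ∈ P}} (hA : IsColConnected A)
    (hAσ : IsColConnected (A ∘ σ))
    (hσ : σ ∈ fiberwise fun b : {b // b ∈ P} ↦ b.1.2) :
    ∃ e ∈ fiberwise (colShape P), (fixedBy ℤ e)ᶜ.Finite ∧
      ∀ c ∈ P.image Prod.fst, colVal (A ∘ σ) c = colVal A (e c) := by
  have hrow : P.val.map (fun b ↦ (b.2, colVal A b.1)) =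
      P.val.map (fun b ↦ (b.2, colVal (A ∘ σ) b.1)) := by
    rw [hP.map_colVal_eq hA, hP.map_colVal_eq hAσ, Function.comp_def,
      map_univ_val_comp_of_mem_fiberwise hσ]
  obtain ⟨e, hout, hin⟩ := exists_perm_of_map_eq (hP.map_colTop_eq_of_map_row_eq hrow)
  refine ⟨e, fun c ↦ ?_, (P.image Prod.fst).finite_toSet.subset fun c hc ↦ ?_,
    fun c hc ↦ (Prod.ext_iff.1 (hin c hc).2).2.symm⟩
  · by_cases hc : c ∈ P.image Prod.fst
    · exact hP.colShape_eq_of_colTop_eq (hin c hc).1 hc (Prod.ext_iff.1 (hin c hc).2).1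
    · rw [hout c hc]
  · by_contra h
    exact hc (hout c h)

theorem IsPyramid.eq_comp_liftCols [AddCommMonoidWithOne 𝕜] [IsRightCancelAdd 𝕜]
    (hP : IsPyramid n P) {A A' : {b // b ∈ P} → 𝕜} (hA : IsColConnected A)
    (hA' : IsColConnected A') {g : Perm ℤ} (hg : g ∈ fiberwise (colShape P))
    (hval : ∀ c ∈ P.image Prod.fst, colVal A' c = colVal A (g c)) :
    A' = A ∘ liftCols P ⟨g, hg⟩ := by
  funext b
  have hb : b.1.1 ∈ P.image Prod.fst := Finset.mem_image_of_mem Prod.fst b.2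
  refine add_right_cancel (b := (b.1.2 : 𝕜)) ?_
  rw [hP.apply_add_eq_colVal hA', hval _ hb]
  exact (hP.apply_add_eq_colVal hA (liftCols P ⟨g, hg⟩ b)).symm

end Pyramid

/-- Fix a pyramid of shape a partition of `N`, modelled as a finite set `P` of boxes
`(c, r)` (column `c ∈ ℤ`, row `r < n`, rows numbered top to bottom) such that every box
strictly above the bottom row sits directly above a box of the row beneath.  Tableaux are
fillings `A : P → 𝕜`; a tableau is column-connected if entries increase by `1` going up
each column.  `S_N` (permutations of the boxes) acts by `(w·A)_b = A_{w(b)}`; `W_row` is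
the subgroup of row-preserving permutations and `W_col` is generated by the column-swaps
(exchanging two columns of equal height box-by-box).  Then two column-connected tableaux
lie in the same `W_row`-orbit iff they lie in the same `W_col`-orbit. -/
theorem stmt12 {𝕜 : Type*} [Field 𝕜] (n : ℕ) (P : Finset (ℤ × ℕ))
    (hrows : ∀ b ∈ P, b.2 < n)
    (hpyr : ∀ (c : ℤ) (r : ℕ), (c, r) ∈ P → r + 1 < n → (c, r + 1) ∈ P)
    (A A' : {b : ℤ × ℕ // b ∈ P} → 𝕜)
    (hA : ∀ (c : ℤ) (r : ℕ) (h1 : (c, r) ∈ P) (h2 : (c, r + 1) ∈ P),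
      A ⟨(c, r), h1⟩ = A ⟨(c, r + 1), h2⟩ + 1)
    (hA' : ∀ (c : ℤ) (r : ℕ) (h1 : (c, r) ∈ P) (h2 : (c, r + 1) ∈ P),
      A' ⟨(c, r), h1⟩ = A' ⟨(c, r + 1), h2⟩ + 1) :
    (∃ σ : Equiv.Perm {b : ℤ × ℕ // b ∈ P},
        (∀ b, ((σ b : ℤ × ℕ)).2 = ((b : ℤ × ℕ)).2) ∧ A' = A ∘ σ) ↔
    (∃ σ ∈ Subgroup.closure
        {σ : Equiv.Perm {b : ℤ × ℕ // b ∈ P} |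
          ∃ c₁ c₂ : ℤ, (∀ r : ℕ, (c₁, r) ∈ P ↔ (c₂, r) ∈ P) ∧
            ∀ b : {b : ℤ × ℕ // b ∈ P},
              ((σ b : ℤ × ℕ)) =
                if ((b : ℤ × ℕ)).1 = c₁ then (c₂, ((b : ℤ × ℕ)).2)
                else if ((b : ℤ × ℕ)).1 = c₂ then (c₁, ((b : ℤ × ℕ)).2)
                else (b : ℤ × ℕ)},
      A' = A ∘ σ) := by
  have hP : IsPyramid n P := ⟨hrows, hpyr⟩
  constructor
  · rintro ⟨σ, hσ, rfl⟩
    obtain ⟨e, he, hfin, hval⟩ := hP.exists_colPerm hA hA' hσ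
    exact ⟨liftCols P ⟨e, he⟩, liftCols_mem_closure he hfin, hP.eq_comp_liftCols hA hA' he hval⟩
  · rintro ⟨σ, hσ, rfl⟩
    exact ⟨σ, closure_isColSwap_le_fiberwise hσ, rfl⟩
end

section
/- Let 𝕜 have characteristic p > 0 and let 𝔤 = gl_N(𝕜) with the Dynkin grading 𝔤 = ⊕_i 𝔤(i) induced by a cocharacter λ (so 𝔤(i) is the t^i-eigenspace of Ad(λ(t))). Let e ∈ 𝔤(2) be nilpotent and let x ∈ e + 𝔤(≤1) satisfy dim 𝔤^x = dim 𝔤^e, where 𝔤^y denotes the centralizer {z ∈ 𝔤 : [z,y]=0}. Then, filtering 𝔤 by 𝔤(≤ d) = ⊕_{j ≤ d} 𝔤(j), the associated graded subspace of [𝔤, x] (with its subspace filtration, shifted by 2) equals [𝔤, e]. -/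
open Matrix

/-- The `t^i`-eigenspace of the conjugation action of a cocharacter
`λ : 𝕜ˣ → GL_N(𝕜)` on `gl_N(𝕜)`: the degree-`i` piece `𝔤(i)` of the Dynkin grading. -/
def eigSub {𝕜 : Type*} [Field 𝕜] {N : ℕ}
    (lam : 𝕜ˣ →* GeneralLinearGroup (Fin N) 𝕜) (i : ℤ) :
    Submodule 𝕜 (Matrix (Fin N) (Fin N) 𝕜) where
  carrier := {X | ∀ t : 𝕜ˣ,
    (lam t : Matrix (Fin N) (Fin N) 𝕜) * X =
      ((t ^ i : 𝕜ˣ) : 𝕜) • (X * (lam t : Matrix (Fin N) (Fin N) 𝕜))}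
  add_mem' := by
    intro X Y hX hY t
    simp [Matrix.mul_add, Matrix.add_mul, hX t, hY t, smul_add]
  zero_mem' := by intro t; simp
  smul_mem' := by
    intro c X hX t
    rw [Matrix.mul_smul, hX t, Matrix.smul_mul, smul_comm]

theorem eig_mul {𝕜 : Type*} [Field 𝕜] {N : ℕ}
    {lam : 𝕜ˣ →* GeneralLinearGroup (Fin N) 𝕜} {a b : ℤ}
    {A B : Matrix (Fin N) (Fin N) 𝕜}
    (hA : A ∈ eigSub lam a) (hB : B ∈ eigSub lam b) :
    A * B ∈ eigSub lam (a + b) := by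
  intro t
  calc (lam t : Matrix (Fin N) (Fin N) 𝕜) * (A * B)
      = ((lam t : Matrix (Fin N) (Fin N) 𝕜) * A) * B := by rw [mul_assoc]
    _ = (((t ^ a : 𝕜ˣ) : 𝕜) • (A * (lam t : Matrix (Fin N) (Fin N) 𝕜))) * B := by rw [hA t]
    _ = ((t ^ a : 𝕜ˣ) : 𝕜) • (A * ((lam t : Matrix (Fin N) (Fin N) 𝕜) * B)) := by
        rw [Matrix.smul_mul, mul_assoc]
    _ = ((t ^ a : 𝕜ˣ) : 𝕜) • (A * (((t ^ b : 𝕜ˣ) : 𝕜) • (B * (lam t : Matrix (Fin N) (Fin N) 𝕜)))) := by rw [hB t]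
    _ = ((t ^ (a + b) : 𝕜ˣ) : 𝕜) • (A * B * (lam t : Matrix (Fin N) (Fin N) 𝕜)) := by
        rw [Matrix.mul_smul, smul_smul, ← Units.val_mul, ← _root_.zpow_add, mul_assoc]

set_option maxHeartbeats 1000000 in
set_option synthInstance.maxHeartbeats 400000 in
/-- Let `𝔤 = gl_N(𝕜)` with the Dynkin grading `𝔤 = ⊕ 𝔤(i)` induced by a (diagonalisable)
cocharacter `λ`, let `e ∈ 𝔤(2)` be nilpotent and `x ∈ e + 𝔤(≤ 1)` with
`dim 𝔤^x = dim 𝔤^e`.  Then the associated graded subspace of `[𝔤, x]` (for the Dynkin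
filtration `𝔤(≤ d)`, realised inside `𝔤` via the projections `π_d` onto `𝔤(d)`, the
degree shift by `2` not affecting the total subspace) equals `[𝔤, e]`. -/
theorem stmt16 {𝕜 : Type*} [Field 𝕜] {N : ℕ}
    (lam : 𝕜ˣ →* GeneralLinearGroup (Fin N) 𝕜)
    (hrat : DirectSum.IsInternal fun i : ℤ => eigSub lam i)
    (e x : Matrix (Fin N) (Fin N) 𝕜)
    (hnil : IsNilpotent e) (he2 : e ∈ eigSub lam 2)
    (hx : x - e ∈ ⨆ j : ℤ, ⨆ _ : j ≤ 1, eigSub lam j)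
    (π : ℤ → (Matrix (Fin N) (Fin N) 𝕜 →ₗ[𝕜] Matrix (Fin N) (Fin N) 𝕜))
    (hπ1 : ∀ (d : ℤ) (X : Matrix (Fin N) (Fin N) 𝕜), π d X ∈ eigSub lam d)
    (hπ2 : ∀ d : ℤ, ∀ X ∈ eigSub lam d, π d X = X)
    (hπ3 : ∀ d j : ℤ, d ≠ j → ∀ X ∈ eigSub lam j, π d X = 0)
    (hdim : Module.finrank 𝕜
        (LinearMap.ker (LinearMap.mulLeft 𝕜 x - LinearMap.mulRight 𝕜 x)) =
      Module.finrank 𝕜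
        (LinearMap.ker (LinearMap.mulLeft 𝕜 e - LinearMap.mulRight 𝕜 e))) :
    (⨆ d : ℤ,
        ((LinearMap.range (LinearMap.mulLeft 𝕜 x - LinearMap.mulRight 𝕜 x) ⊓
            ⨆ j : ℤ, ⨆ _ : j ≤ d, eigSub lam j).map (π d))) =
      LinearMap.range (LinearMap.mulLeft 𝕜 e - LinearMap.mulRight 𝕜 e) := by
  classical
  set adx : Matrix (Fin N) (Fin N) 𝕜 →ₗ[𝕜] Matrix (Fin N) (Fin N) 𝕜 :=
    LinearMap.mulLeft 𝕜 x - LinearMap.mulRight 𝕜 x with hadx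
  set ade : Matrix (Fin N) (Fin N) 𝕜 →ₗ[𝕜] Matrix (Fin N) (Fin N) 𝕜 :=
    LinearMap.mulLeft 𝕜 e - LinearMap.mulRight 𝕜 e with hade
  let F : ℤ → Submodule 𝕜 (Matrix (Fin N) (Fin N) 𝕜) :=
    fun d => ⨆ j : ℤ, ⨆ _ : j ≤ d, eigSub lam j
  let piece : ℤ → Submodule 𝕜 (Matrix (Fin N) (Fin N) 𝕜) :=
    fun d => (LinearMap.range adx ⊓ F d).map (π d)
  show (⨆ d : ℤ, piece d) = LinearMap.range ade
  have hadx_apply : ∀ z : Matrix (Fin N) (Fin N) 𝕜, adx z = x * z - z * x := by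
    intro z; simp [hadx, LinearMap.sub_apply]
  have hade_apply : ∀ z : Matrix (Fin N) (Fin N) 𝕜, ade z = e * z - z * e := by
    intro z; simp [hade, LinearMap.sub_apply]
  have hEF : ∀ {j d : ℤ}, j ≤ d → eigSub lam j ≤ F d := by
    intro j d hj
    exact le_iSup₂_of_le j hj le_rfl
  have hF_mono : Monotone F := by
    intro d d' h
    exact iSup₂_le fun j hj => hEF (hj.trans h)
  have hπF : ∀ {d d' : ℤ}, d' < d → ∀ X ∈ F d', π d X = 0 := by
    intro d d' h X hX
    have : F d' ≤ LinearMap.ker (π d) :=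
      iSup₂_le fun j hj => fun Y hY => LinearMap.mem_ker.2 (hπ3 d j (by omega) Y hY)
    exact this hX
  have hsupT : (⨆ i : ℤ, eigSub lam i) = ⊤ := hrat.submodule_iSup_eq_top
  -- Step 1: every homogeneous bracket with e is in the LHS
  have key : ∀ j : ℤ, ∀ z ∈ eigSub lam j, ade z ∈ piece (j + 2) := by
    intro j z hz
    have h1 : ade z ∈ eigSub lam (j + 2) := by
      rw [hade_apply]
      have h2 : e * z ∈ eigSub lam (2 + j) := eig_mul he2 hz
      rw [show (2 : ℤ) + j = j + 2 by ring] at h2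
      exact sub_mem h2 (eig_mul hz he2)
    have h2 : adx z - ade z ∈ F (j + 1) := by
      have heq : adx z - ade z =
          (LinearMap.mulRight 𝕜 z - LinearMap.mulLeft 𝕜 z) (x - e) := by
        simp only [hadx_apply, hade_apply, LinearMap.sub_apply,
          LinearMap.mulLeft_apply, LinearMap.mulRight_apply]
        noncomm_ring
      rw [heq]
      have hle : F 1 ≤ (F (j + 1)).comap
          (LinearMap.mulRight 𝕜 z - LinearMap.mulLeft 𝕜 z) := by
        refine iSup₂_le fun k hk => fun w hw => ?_
        simp only [Submodule.mem_comap, LinearMap.sub_apply,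
          LinearMap.mulLeft_apply, LinearMap.mulRight_apply]
        have hwz : w * z ∈ eigSub lam (k + j) := eig_mul hw hz
        have hzw : z * w ∈ eigSub lam (j + k) := eig_mul hz hw
        exact sub_mem (hEF (by omega) hwz) (hEF (by omega) hzw)
      exact hle hx
    have h3 : adx z ∈ F (j + 2) := by
      have := add_mem (hF_mono (by omega : (j:ℤ) + 1 ≤ j + 2) h2) (hEF le_rfl h1)
      simpa using this
    have h4 : π (j + 2) (adx z) = ade z := by
      have hsum := map_add (π (j + 2)) (adx z - ade z) (ade z)
      rw [sub_add_cancel] at hsum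
      rw [hsum, hπF (by omega) _ h2, hπ2 _ _ h1, zero_add]
    exact Submodule.mem_map.2 ⟨adx z, ⟨LinearMap.mem_range.2 ⟨z, rfl⟩, h3⟩, h4⟩
  have step1 : LinearMap.range ade ≤ ⨆ d : ℤ, piece d := by
    rw [LinearMap.range_eq_map, ← hsupT, Submodule.map_iSup]
    refine iSup_le fun j => ?_
    rintro y hy
    obtain ⟨z, hz, rfl⟩ := Submodule.mem_map.1 hy
    exact (le_iSup piece (j + 2)) (key j z hz)
  -- Finiteness of the support of the grading
  have hind : iSupIndep (fun i : ℤ => eigSub lam i) := hrat.submodule_iSupIndep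
  haveI : Fintype {i : ℤ | eigSub lam i ≠ ⊥} := hind.fintypeNeBotOfFiniteDimensional
  have hfin : {i : ℤ | eigSub lam i ≠ ⊥}.Finite := Set.toFinite _
  obtain ⟨b0, hb0⟩ := hfin.bddAbove
  obtain ⟨a0, ha0⟩ := hfin.bddBelow
  have hbotj : ∀ j : ℤ, (j < a0 ∨ b0 < j) → eigSub lam j = ⊥ := by
    intro j hj
    by_contra h
    rcases hj with hj | hj
    · exact absurd (ha0 h) (by omega)
    · exact absurd (hb0 h) (by omega)
  have hFtop : ∀ d : ℤ, b0 ≤ d → F d = ⊤ := by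
    intro d hd
    refine le_antisymm le_top ?_
    rw [← hsupT]
    refine iSup_le fun j => ?_
    by_cases hj : j ≤ d
    · exact hEF hj
    · rw [hbotj j (by omega)]; exact bot_le
  have hFbot : ∀ d : ℤ, d < a0 → F d = ⊥ := by
    intro d hd
    refine le_antisymm ?_ bot_le
    refine iSup₂_le fun j hj => ?_
    rw [hbotj j (by omega)]
  have hpiece_bot : ∀ d : ℤ, b0 < d → piece d = ⊥ := by
    intro d hd
    refine le_antisymm ?_ bot_le
    rintro y hy
    obtain ⟨X, _, rfl⟩ := Submodule.mem_map.1 hy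
    have := hπ1 d X
    rw [hbotj d (by omega)] at this
    simpa using this
  -- partial graded pieces
  let S : ℤ → Submodule 𝕜 (Matrix (Fin N) (Fin N) 𝕜) :=
    fun d => ⨆ j : ℤ, ⨆ _ : j ≤ d, piece j
  have hS_split : ∀ d : ℤ, S d = S (d - 1) ⊔ piece d := by
    intro d
    refine le_antisymm (iSup₂_le fun j hj => ?_) (sup_le ?_ ?_)
    · rcases eq_or_lt_of_le hj with rfl | hj'
      · exact le_sup_right
      · exact le_sup_left.trans' (le_iSup₂_of_le j (by omega) le_rfl)
    · exact iSup₂_le fun j hj => le_iSup₂_of_le j (by omega) le_rfl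
    · exact le_iSup₂_of_le d le_rfl le_rfl
  have hSbase : Module.finrank 𝕜 (S (a0 - 1)) ≤
      Module.finrank 𝕜
        (LinearMap.range adx ⊓ F (a0 - 1) : Submodule 𝕜 (Matrix (Fin N) (Fin N) 𝕜)) := by
    have hSbot : S (a0 - 1) = ⊥ := by
      refine le_antisymm (iSup₂_le fun j hj => ?_) bot_le
      have hFj : F j = ⊥ := hFbot j (by omega)
      show piece j ≤ ⊥
      simp only [piece, hFj, inf_bot_eq, Submodule.map_bot, le_refl]
    rw [hSbot]
    simp
  have hSstep : ∀ d : ℤ, a0 - 1 ≤ d →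
      Module.finrank 𝕜 (S d) ≤
        Module.finrank 𝕜
          (LinearMap.range adx ⊓ F d : Submodule 𝕜 (Matrix (Fin N) (Fin N) 𝕜)) →
      Module.finrank 𝕜 (S (d + 1)) ≤
        Module.finrank 𝕜
          (LinearMap.range adx ⊓ F (d + 1) : Submodule 𝕜 (Matrix (Fin N) (Fin N) 𝕜)) := by
    intro d hd ih
    have hsplit := hS_split (d + 1)
    rw [show (d : ℤ) + 1 - 1 = d by ring] at hsplit
    have h1 : Module.finrank 𝕜 (S (d + 1)) ≤
        Module.finrank 𝕜 (S d) + Module.finrank 𝕜 (piece (d + 1)) := by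
      have := Submodule.finrank_sup_add_finrank_inf_eq (S d) (piece (d + 1))
      rw [← hsplit] at this
      omega
    set W : Submodule 𝕜 (Matrix (Fin N) (Fin N) 𝕜) := LinearMap.range adx ⊓ F (d + 1)
      with hW
    set f : W →ₗ[𝕜] Matrix (Fin N) (Fin N) 𝕜 := (π (d + 1)).comp W.subtype with hf
    have hrange : LinearMap.range f = piece (d + 1) := by
      rw [hf, LinearMap.range_comp, Submodule.range_subtype]
    have hrn := LinearMap.finrank_range_add_finrank_ker f
    rw [hrange] at hrn
    have hWle : LinearMap.range adx ⊓ F d ≤ W :=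
      inf_le_inf_left _ (hF_mono (by omega))
    have hker_ge : Module.finrank 𝕜
          (LinearMap.range adx ⊓ F d : Submodule 𝕜 (Matrix (Fin N) (Fin N) 𝕜)) ≤
        Module.finrank 𝕜 (LinearMap.ker f) := by
      have hKle : (LinearMap.range adx ⊓ F d).comap W.subtype ≤ LinearMap.ker f := by
        rintro ⟨w, hw⟩ hmem
        simp only [Submodule.mem_comap, Submodule.subtype_apply] at hmem
        have hz : π (d + 1) w = 0 := hπF (by omega) w hmem.2
        simpa [hf, LinearMap.mem_ker] using hz
      calc Module.finrank 𝕜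
            (LinearMap.range adx ⊓ F d : Submodule 𝕜 (Matrix (Fin N) (Fin N) 𝕜))
          = Module.finrank 𝕜 ((LinearMap.range adx ⊓ F d).comap W.subtype) :=
            (LinearEquiv.finrank_eq (Submodule.comapSubtypeEquivOfLe hWle)).symm
        _ ≤ Module.finrank 𝕜 (LinearMap.ker f) := Submodule.finrank_mono hKle
    omega
  have hSdim : ∀ d : ℤ, a0 - 1 ≤ d →
      Module.finrank 𝕜 (S d) ≤
        Module.finrank 𝕜
          (LinearMap.range adx ⊓ F d : Submodule 𝕜 (Matrix (Fin N) (Fin N) 𝕜)) :=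
    Int.le_induction hSbase hSstep
  -- choose a big degree
  set b : ℤ := max b0 (a0 - 1) with hb
  have hLS : (⨆ d : ℤ, piece d) = S b := by
    refine le_antisymm (iSup_le fun d => ?_) (iSup₂_le fun j _ => le_iSup piece j)
    by_cases hd : d ≤ b
    · exact le_iSup₂_of_le d hd le_rfl
    · rw [hpiece_bot d (by omega)]; exact bot_le
  have hfinL : Module.finrank 𝕜 (⨆ d : ℤ, piece d : Submodule 𝕜 (Matrix (Fin N) (Fin N) 𝕜)) ≤
      Module.finrank 𝕜 (LinearMap.range adx) := by
    rw [hLS]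
    have h := hSdim b (by omega)
    rwa [hFtop b (by omega), inf_top_eq] at h
  have hrk : Module.finrank 𝕜 (LinearMap.range adx) =
      Module.finrank 𝕜 (LinearMap.range ade) := by
    have h1 := LinearMap.finrank_range_add_finrank_ker adx
    have h2 := LinearMap.finrank_range_add_finrank_ker ade
    omega
  exact (Submodule.eq_of_le_of_finrank_le step1 (hfinL.trans hrk.le)).symm
end
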